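/- arXiv:2402.00642 — 4 statements merged into one kernel-verified Lean document; each statement's English description precedes it below -/
import Mathlib

section
/- For every integer m ≥ 1 and every real ε > 0 there exists n₀ such that for all n ≥ n₀ the following holds: if Σ = (a_1, …, a_n) is a sequence of integers with every a_i ∈ [0, M] such that e^m_Σ(A₁) ≠ e^m_Σ(A₂) for all distinct subsets A₁, A₂ ⊆ {1, …, n} with |A₁|, |A₂| ≥ m, then M > (1 − ε) · (2^{1 − 1/m} · ((m−1)!)^{1/m} / 3^{1/(2m)}) · 2^{n/m} / n^{1 − 1/(2m)}. -/
open Finset Filter Real Topology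

/-- The `m`-th evaluation of the integer sequence `a` on the subset `A`:
the sum over all `m`-element subsets of `A` of the product of the entries.
It is `0` when `|A| < m`. -/
def mthEval (n m : ℕ) (a : Fin n → ℤ) (A : Finset (Fin n)) : ℤ :=
  ∑ S ∈ A.powersetCard m, ∏ i ∈ S, a i

namespace SMVAux

/-- (K-1)^3 ≤ 3 * ∑_{k<K} k^2 -/
lemma cube_le_three_sum_sq (K : ℕ) : (K - 1) ^ 3 ≤ 3 * ∑ k ∈ Finset.range K, k ^ 2 := by
  induction K with
  | zero => simp
  | succ N ih =>
    rw [Finset.sum_range_succ, Nat.succ_sub_one]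
    rcases Nat.eq_zero_or_pos N with h | h
    · subst h; simp
    · obtain ⟨j, rfl⟩ := Nat.exists_eq_add_of_le h
      have : (1 + j - 1) ^ 3 ≤ 3 * ∑ k ∈ Finset.range (1+j), k ^ 2 := ih
      simp only [Nat.add_sub_cancel_left] at this ⊢
      nlinarith [this]

/-- sum of squares over K distinct naturals is at least ∑_{i<K} i^2 -/
lemma sum_sq_range_le_sum (s : Finset ℕ) : ∑ i ∈ Finset.range s.card, i ^ 2 ≤ ∑ k ∈ s, k ^ 2 := by
  obtain ⟨N, hN⟩ : ∃ N, s.card = N := ⟨_, rfl⟩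
  rw [hN]
  induction N generalizing s with
  | zero => simp
  | succ N ih =>
    have hne : s.Nonempty := by rw [← Finset.card_pos, hN]; omega
    set x := s.max' hne with hx
    have hxm : x ∈ s := s.max'_mem hne
    have hcard : (s.erase x).card = N := by rw [Finset.card_erase_of_mem hxm, hN]; omega
    have hsub : s ⊆ Finset.range (x + 1) := by
      intro k hk
      simp only [Finset.mem_range]
      exact Nat.lt_succ_of_le (s.le_max' k hk)
    have hNx : N ≤ x := by
      have := Finset.card_le_card hsub
      rw [hN, Finset.card_range] at this
      omega
    calc ∑ i ∈ Finset.range (N + 1), i ^ 2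
        = (∑ i ∈ Finset.range N, i ^ 2) + N ^ 2 := Finset.sum_range_succ _ _
      _ ≤ (∑ k ∈ s.erase x, k ^ 2) + x ^ 2 :=
          Nat.add_le_add (hcard ▸ ih (s.erase x) hcard) (Nat.pow_le_pow_left hNx 2)
      _ = ∑ k ∈ s, k ^ 2 := Finset.sum_erase_add s _ hxm

/-- distinct integers: sum of squared (doubled) deviations from any center -/
lemma sum_sq_dev (X : Finset ℤ) (c : ℤ) :
    ((∑ i ∈ Finset.range X.card, i ^ 2 : ℕ) : ℤ) ≤ ∑ x ∈ X, (2 * (x - c)) ^ 2 := by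
  set f : ℤ → ℕ := fun t => if c < t then (2 * (t - c) - 1).toNat else (2 * (c - t)).toNat with hf
  have hinj : Function.Injective f := by
    intro s t h
    simp only [hf] at h
    split_ifs at h <;> omega
  have h1 : ∀ x : ℤ, ((f x : ℤ)) ^ 2 ≤ (2 * (x - c)) ^ 2 := by
    intro x
    simp only [hf]
    split_ifs with h
    · have hc : (((2 * (x - c) - 1).toNat : ℤ)) = 2 * (x - c) - 1 := by omega
      rw [hc]; nlinarith [h]
    · have hc : (((2 * (c - x)).toNat : ℤ)) = 2 * (c - x) := by omega
      rw [hc]; nlinarith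
  have h2 : ((∑ k ∈ X.image f, k ^ 2 : ℕ) : ℤ) ≤ ∑ x ∈ X, (2 * (x - c)) ^ 2 := by
    push_cast
    rw [Finset.sum_image (fun x _ y _ h => hinj h)]
    exact Finset.sum_le_sum fun x _ => h1 x
  refine le_trans ?_ h2
  have := sum_sq_range_le_sum (X.image f)
  rw [Finset.card_image_of_injective _ hinj] at this
  exact_mod_cast this

/-- number of subsets of `univ : Finset (Fin n)` containing a fixed `S` -/
lemma card_supersets {n : ℕ} (S : Finset (Fin n)) :
    ((Finset.univ : Finset (Fin n)).powerset.filter (fun A => S ⊆ A)).card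
      = 2 ^ (n - S.card) := by
  rw [Finset.card_nbij' (i := fun A => A \ S) (j := fun B => B ∪ S)
      (t := (Finset.univ \ S).powerset)]
  · rw [Finset.card_powerset, Finset.card_sdiff_of_subset (Finset.subset_univ S), Finset.card_univ,
      Fintype.card_fin]
  · intro A hA
    simp only [Finset.mem_coe, Finset.mem_filter, Finset.mem_powerset] at hA ⊢
    exact Finset.sdiff_subset_sdiff hA.1 le_rfl
  · intro B hB
    simp only [Finset.mem_coe, Finset.mem_filter, Finset.mem_powerset] at hB ⊢
    exact ⟨Finset.subset_univ _, Finset.subset_union_right⟩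
  · intro A hA
    simp only [Finset.mem_coe, Finset.mem_filter, Finset.mem_powerset] at hA
    exact Finset.sdiff_union_of_subset hA.2
  · intro B hB
    simp only [Finset.mem_coe, Finset.mem_powerset] at hB
    have hd : Disjoint B S := Finset.disjoint_of_subset_left hB (Finset.sdiff_disjoint)
    exact Finset.union_sdiff_cancel_right hd

lemma powersetCard_eq_filter_univ {n k : ℕ} (X : Finset (Fin n)) :
    X.powersetCard k = (Finset.univ.powersetCard k).filter (fun T => T ⊆ X) := by
  ext T
  simp only [Finset.mem_powersetCard, Finset.mem_filter, Finset.subset_univ, true_and]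
  tauto


section Master

variable {n m : ℕ} (a : Fin n → ℤ)

lemma eval_expand (A : Finset (Fin n)) :
    mthEval n m a A
      = ∑ S ∈ Finset.univ.powersetCard m, if S ⊆ A then ∏ i ∈ S, a i else 0 := by
  rw [mthEval, powersetCard_eq_filter_univ, Finset.sum_filter]

lemma sum_ite_subset (𝒜 : Finset (Finset (Fin n))) (S : Finset (Fin n)) (x : ℤ) :
    ∑ A ∈ 𝒜, (if S ⊆ A then x else 0) = ((𝒜.filter fun A => S ⊆ A).card : ℤ) * x := by
  rw [← Finset.sum_filter, Finset.sum_const, nsmul_eq_mul]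

lemma sum1 : ∑ A ∈ (Finset.univ : Finset (Fin n)).powerset, mthEval n m a A
    = 2 ^ (n - m) * ∑ S ∈ Finset.univ.powersetCard m, ∏ i ∈ S, a i := by
  simp_rw [eval_expand a]
  rw [Finset.sum_comm, Finset.mul_sum]
  refine Finset.sum_congr rfl fun S hS => ?_
  rw [sum_ite_subset, card_supersets, (Finset.mem_powersetCard.mp hS).2]
  push_cast
  ring

lemma sum2 : ∑ A ∈ (Finset.univ : Finset (Fin n)).powerset, (mthEval n m a A) ^ 2
    = ∑ S ∈ Finset.univ.powersetCard m, ∑ T ∈ Finset.univ.powersetCard m,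
        (∏ i ∈ S, a i) * (∏ i ∈ T, a i) * 2 ^ (n - (S ∪ T).card) := by
  have key : ∀ A ∈ (Finset.univ : Finset (Fin n)).powerset, (mthEval n m a A) ^ 2
      = ∑ S ∈ Finset.univ.powersetCard m, ∑ T ∈ Finset.univ.powersetCard m,
        (if S ∪ T ⊆ A then (∏ i ∈ S, a i) * (∏ i ∈ T, a i) else 0) := by
    intro A _
    rw [sq, eval_expand a, Finset.sum_mul_sum]
    refine Finset.sum_congr rfl fun S _ => Finset.sum_congr rfl fun T _ => ?_
    by_cases h1 : S ⊆ A <;> by_cases h2 : T ⊆ A <;>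
      simp [h1, h2, Finset.union_subset_iff]
  rw [Finset.sum_congr rfl key, Finset.sum_comm]
  refine Finset.sum_congr rfl fun S _ => ?_
  rw [Finset.sum_comm]
  refine Finset.sum_congr rfl fun T _ => ?_
  rw [sum_ite_subset, card_supersets]
  push_cast
  ring

lemma master (hm : 1 ≤ m) (hn : 2 * m ≤ n) (M : ℤ)
    (ha : ∀ i, 0 ≤ a i ∧ a i ≤ M)
    (hd : ∀ A₁ A₂ : Finset (Fin n), A₁ ≠ A₂ → m ≤ A₁.card → m ≤ A₂.card →
        mthEval n m a A₁ ≠ mthEval n m a A₂) :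
    (2:ℤ) ^ n * ((∑ i ∈ Finset.range (((Finset.univ : Finset (Fin n)).powerset.filter
        fun A => m ≤ A.card).card), i ^ 2 : ℕ) : ℤ)
      ≤ 4 * (2 ^ (2 * (n - m)) * M ^ (2 * m) *
          ∑ S ∈ (Finset.univ : Finset (Fin n)).powersetCard m,
            ∑ T ∈ (Finset.univ : Finset (Fin n)).powersetCard m,
            ((2:ℤ) ^ ((S ∩ T).card) - 1)) + 4 ^ n := by
  have hn1 : 1 ≤ n := by omega
  have hM : 0 ≤ M := le_trans (ha ⟨0, by omega⟩).1 (ha ⟨0, by omega⟩).2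
  set E : Finset (Fin n) → ℤ := mthEval n m a with hE
  set t : ℤ := ∑ A ∈ (Finset.univ : Finset (Fin n)).powerset, E A with ht
  set q : ℤ := ∑ A ∈ (Finset.univ : Finset (Fin n)).powerset, (E A) ^ 2 with hq
  -- the center
  set c : ℤ := (t + 2 ^ (n - 1)) / 2 ^ n with hc
  have hediv : (2:ℤ) ^ n * c + (t + 2 ^ (n-1)) % 2 ^ n = t + 2 ^ (n-1) :=
    Int.mul_ediv_add_emod _ _
  have hr0 : 0 ≤ (t + 2 ^ (n-1)) % 2 ^ n := Int.emod_nonneg _ (by positivity)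
  have hr1 : (t + 2 ^ (n-1)) % 2 ^ n < 2 ^ n := Int.emod_lt_of_pos _ (by positivity)
  have hpow : (2:ℤ) ^ n = 2 * 2 ^ (n - 1) := by
    rw [← pow_succ']
    congr 1
    omega
  have h4n : (4:ℤ) ^ n = 2 ^ n * 2 ^ n := by
    rw [(by norm_num : (4:ℤ) = 2 * 2), mul_pow]
  have hcbound : (2 * (t - 2 ^ n * c)) ^ 2 ≤ 4 ^ n := by
    rw [h4n]
    set r := (t + 2 ^ (n-1)) % 2 ^ n
    have hd2 : t - 2 ^ n * c = r - 2 ^ (n-1) := by omega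
    rw [hd2]
    nlinarith [hr0, hr1, hpow]
  -- expansion identity
  have expand : ∑ A ∈ (Finset.univ : Finset (Fin n)).powerset, (2 * (E A - c)) ^ 2
      = 4 * q - 8 * c * t + (2:ℤ) ^ n * (4 * c ^ 2) := by
    have h1 : ∀ A : Finset (Fin n), (2 * (E A - c)) ^ 2
        = 4 * (E A) ^ 2 - 8 * c * (E A) + 4 * c ^ 2 := fun A => by ring
    simp_rw [h1]
    rw [Finset.sum_add_distrib, Finset.sum_sub_distrib, ← Finset.mul_sum, ← Finset.mul_sum,
      Finset.sum_const, Finset.card_powerset, Finset.card_univ, Fintype.card_fin,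
      nsmul_eq_mul]
    push_cast
    ring
  have key : (2:ℤ) ^ n * ∑ A ∈ (Finset.univ : Finset (Fin n)).powerset, (2 * (E A - c)) ^ 2
      = 4 * ((2:ℤ) ^ n * q - t ^ 2) + (2 * (t - 2 ^ n * c)) ^ 2 := by
    rw [expand]
    ring
  -- lower bound via distinctness
  set good : Finset (Finset (Fin n)) :=
    (Finset.univ : Finset (Fin n)).powerset.filter (fun A => m ≤ A.card) with hgood
  have hinj : ∀ A₁ ∈ good, ∀ A₂ ∈ good, E A₁ = E A₂ → A₁ = A₂ := by
    intro A₁ h₁ A₂ h₂ hEq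
    by_contra hne
    exact hd A₁ A₂ hne (Finset.mem_filter.mp h₁).2 (Finset.mem_filter.mp h₂).2 hEq
  have hlow : ((∑ i ∈ Finset.range good.card, i ^ 2 : ℕ) : ℤ)
      ≤ ∑ A ∈ (Finset.univ : Finset (Fin n)).powerset, (2 * (E A - c)) ^ 2 := by
    have h1 : ∑ A ∈ good, (2 * (E A - c)) ^ 2
        ≤ ∑ A ∈ (Finset.univ : Finset (Fin n)).powerset, (2 * (E A - c)) ^ 2 :=
      Finset.sum_le_sum_of_subset_of_nonneg (Finset.filter_subset _ _)
        (fun A _ _ => sq_nonneg _)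
    have h2 : ∑ y ∈ good.image E, (2 * (y - c)) ^ 2 = ∑ A ∈ good, (2 * (E A - c)) ^ 2 :=
      Finset.sum_image hinj
    have h3 := sum_sq_dev (good.image E) c
    rw [Finset.card_image_of_injOn hinj] at h3
    calc ((∑ i ∈ Finset.range good.card, i ^ 2 : ℕ) : ℤ)
        ≤ ∑ y ∈ good.image E, (2 * (y - c)) ^ 2 := h3
      _ = ∑ A ∈ good, (2 * (E A - c)) ^ 2 := h2
      _ ≤ _ := h1
  -- upper bound on the variance term
  set W : ℤ := ∑ S ∈ (Finset.univ : Finset (Fin n)).powersetCard m,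
      ∑ T ∈ (Finset.univ : Finset (Fin n)).powersetCard m,
      ((2:ℤ) ^ ((S ∩ T).card) - 1) with hW
  have hπ : ∀ S ∈ (Finset.univ : Finset (Fin n)).powersetCard m,
      0 ≤ ∏ i ∈ S, a i ∧ ∏ i ∈ S, a i ≤ M ^ m := by
    intro S hS
    constructor
    · exact Finset.prod_nonneg fun i _ => (ha i).1
    · calc ∏ i ∈ S, a i ≤ ∏ i ∈ S, M :=
            Finset.prod_le_prod (fun i _ => (ha i).1) (fun i _ => (ha i).2)
        _ = M ^ S.card := Finset.prod_const M
        _ = M ^ m := by rw [(Finset.mem_powersetCard.mp hS).2]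
  have hQ : (2:ℤ) ^ n * q - t ^ 2 ≤ 2 ^ (2 * (n - m)) * M ^ (2 * m) * W := by
    have hq2 : (2:ℤ) ^ n * q = ∑ S ∈ Finset.univ.powersetCard m,
        ∑ T ∈ Finset.univ.powersetCard m,
          (∏ i ∈ S, a i) * (∏ i ∈ T, a i) * 2 ^ (n + (n - (S ∪ T).card)) := by
      rw [hq, sum2, Finset.mul_sum]
      refine Finset.sum_congr rfl fun S _ => ?_
      rw [Finset.mul_sum]
      refine Finset.sum_congr rfl fun T _ => ?_
      rw [pow_add]
      ring
    have ht2 : t ^ 2 = ∑ S ∈ Finset.univ.powersetCard m,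
        ∑ T ∈ Finset.univ.powersetCard m,
          (∏ i ∈ S, a i) * (∏ i ∈ T, a i) * 2 ^ (2 * (n - m)) := by
      have hstep : t ^ 2 = (2:ℤ) ^ (n - m) * 2 ^ (n - m) *
          ((∑ S ∈ (Finset.univ : Finset (Fin n)).powersetCard m, ∏ i ∈ S, a i) *
           (∑ T ∈ (Finset.univ : Finset (Fin n)).powersetCard m, ∏ i ∈ T, a i)) := by
        rw [ht, sum1]; ring
      rw [hstep, Finset.sum_mul_sum, Finset.mul_sum]
      refine Finset.sum_congr rfl fun S _ => ?_
      rw [Finset.mul_sum]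
      refine Finset.sum_congr rfl fun T _ => ?_
      rw [(by ring : 2 * (n - m) = (n - m) + (n - m)), pow_add]
      ring
    rw [hq2, ht2, ← Finset.sum_sub_distrib]
    rw [hW, Finset.mul_sum]
    refine Finset.sum_le_sum fun S hS => ?_
    rw [← Finset.sum_sub_distrib, Finset.mul_sum]
    refine Finset.sum_le_sum fun T hT => ?_
    have hScard := (Finset.mem_powersetCard.mp hS).2
    have hTcard := (Finset.mem_powersetCard.mp hT).2
    have hiu : (S ∩ T).card + (S ∪ T).card = 2 * m := by
      rw [Finset.card_inter_add_card_union, hScard, hTcard]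
      ring
    have hun : (S ∪ T).card ≤ n := by
      calc (S ∪ T).card ≤ (Finset.univ : Finset (Fin n)).card :=
            Finset.card_le_card (Finset.subset_univ _)
        _ = n := by rw [Finset.card_univ, Fintype.card_fin]
    have hexp : n + (n - (S ∪ T).card) = 2 * (n - m) + (S ∩ T).card := by omega
    rw [hexp, pow_add]
    have h2pos : (0:ℤ) ≤ 2 ^ (2 * (n - m)) := by positivity
    have h1le : (1:ℤ) ≤ 2 ^ ((S ∩ T).card) := one_le_pow₀ one_le_two
    have hprodle : (∏ i ∈ S, a i) * (∏ i ∈ T, a i) ≤ M ^ (2 * m) := by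
      have h2m : M ^ (2 * m) = M ^ m * M ^ m := by rw [two_mul, pow_add]
      rw [h2m]
      exact mul_le_mul (hπ S hS).2 (hπ T hT).2 (hπ T hT).1 (pow_nonneg hM m)
    calc (∏ i ∈ S, a i) * (∏ i ∈ T, a i) * (2 ^ (2 * (n - m)) * 2 ^ ((S ∩ T).card))
          - (∏ i ∈ S, a i) * (∏ i ∈ T, a i) * 2 ^ (2 * (n - m))
        = (∏ i ∈ S, a i) * (∏ i ∈ T, a i) * (2 ^ (2 * (n - m)) * (2 ^ ((S ∩ T).card) - 1)) :=
          by ring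
      _ ≤ M ^ (2 * m) * (2 ^ (2 * (n - m)) * (2 ^ ((S ∩ T).card) - 1)) := by
          refine mul_le_mul_of_nonneg_right hprodle ?_
          have : (0:ℤ) ≤ 2 ^ ((S ∩ T).card) - 1 := by linarith
          positivity
      _ = M ^ (2 * m) * 2 ^ (2 * (n - m)) * (2 ^ ((S ∩ T).card) - 1) := by ring
      _ = 2 ^ (2 * (n - m)) * M ^ (2 * m) * (2 ^ ((S ∩ T).card) - 1) := by ring
  -- assemble
  have hfinal : (2:ℤ) ^ n * ((∑ i ∈ Finset.range good.card, i ^ 2 : ℕ) : ℤ)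
      ≤ 4 * (2 ^ (2 * (n - m)) * M ^ (2 * m) * W) + 4 ^ n := by
    have h2n : (0:ℤ) ≤ 2 ^ n := by positivity
    have h5 := mul_le_mul_of_nonneg_left hlow h2n
    rw [key] at h5
    linarith [hcbound, mul_le_mul_of_nonneg_left hQ (by norm_num : (0:ℤ) ≤ 4)]
  exact hfinal

end Master


lemma triple_swap {α β γ M : Type*} [AddCommMonoid M] (s : Finset α) (t : Finset β)
    (u : Finset γ) (f : α → β → γ → M) :
    ∑ x ∈ s, ∑ y ∈ t, ∑ z ∈ u, f x y z = ∑ z ∈ u, ∑ x ∈ s, ∑ y ∈ t, f x y z := by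
  have h1 : ∀ x ∈ s, ∑ y ∈ t, ∑ z ∈ u, f x y z = ∑ z ∈ u, ∑ y ∈ t, f x y z :=
    fun x _ => Finset.sum_comm
  rw [Finset.sum_congr rfl h1, Finset.sum_comm]

section Counts

variable {n m : ℕ}

lemma card_bad_le (hn1 : 1 ≤ n) :
    (((Finset.univ : Finset (Fin n)).powerset.filter fun A => ¬ m ≤ A.card).card)
      ≤ m * n ^ (m - 1) := by
  have hsub : ((Finset.univ : Finset (Fin n)).powerset.filter fun A => ¬ m ≤ A.card)
      ⊆ (Finset.range m).biUnion (fun k => (Finset.univ : Finset (Fin n)).powersetCard k) := by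
    intro A hA
    rw [Finset.mem_filter] at hA
    rw [Finset.mem_biUnion]
    exact ⟨A.card, Finset.mem_range.mpr (by omega), Finset.mem_powersetCard.mpr
      ⟨Finset.subset_univ _, rfl⟩⟩
  calc (((Finset.univ : Finset (Fin n)).powerset.filter fun A => ¬ m ≤ A.card).card)
      ≤ ((Finset.range m).biUnion
          (fun k => (Finset.univ : Finset (Fin n)).powersetCard k)).card :=
        Finset.card_le_card hsub
    _ ≤ ∑ k ∈ Finset.range m, ((Finset.univ : Finset (Fin n)).powersetCard k).card :=
        Finset.card_biUnion_le
    _ ≤ ∑ k ∈ Finset.range m, n ^ (m - 1) := by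
        refine Finset.sum_le_sum fun k hk => ?_
        rw [Finset.card_powersetCard, Finset.card_univ, Fintype.card_fin]
        calc n.choose k ≤ n ^ k := Nat.choose_le_pow n k
          _ ≤ n ^ (m - 1) := Nat.pow_le_pow_right hn1 (by
              have := Finset.mem_range.mp hk; omega)
    _ = m * n ^ (m - 1) := by rw [Finset.sum_const, Finset.card_range, smul_eq_mul]

lemma count_through_le (i : Fin n) :
    (((Finset.univ : Finset (Fin n)).powersetCard m).filter fun S => i ∈ S).card
      ≤ n.choose (m - 1) := by
  have h : (((Finset.univ : Finset (Fin n)).powersetCard m).filter fun S => i ∈ S).card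
      ≤ ((Finset.univ : Finset (Fin n)).powersetCard (m - 1)).card := by
    refine Finset.card_le_card_of_injOn (fun S => S.erase i) ?_ ?_
    · intro S hS
      rw [Finset.mem_coe, Finset.mem_filter, Finset.mem_powersetCard] at hS
      simp only [Finset.mem_coe, Finset.mem_powersetCard]
      exact ⟨Finset.subset_univ _, by rw [Finset.card_erase_of_mem hS.2, hS.1.2]⟩
    · intro S hS T hT hET
      rw [Finset.coe_filter, Set.mem_setOf_eq] at hS hT
      have h2 : S.erase i = T.erase i := hET
      rw [← Finset.insert_erase hS.2, h2, Finset.insert_erase hT.2]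
  rwa [Finset.card_powersetCard, Finset.card_univ, Fintype.card_fin] at h

lemma count_pair_le (U : Finset (Fin n)) (hU : U.card = 2) :
    (((Finset.univ : Finset (Fin n)).powersetCard m).filter fun S => U ⊆ S).card
      ≤ n.choose (m - 2) := by
  have h : (((Finset.univ : Finset (Fin n)).powersetCard m).filter fun S => U ⊆ S).card
      ≤ ((Finset.univ : Finset (Fin n)).powersetCard (m - 2)).card := by
    refine Finset.card_le_card_of_injOn (fun S => S \ U) ?_ ?_
    · intro S hS
      rw [Finset.mem_coe, Finset.mem_filter, Finset.mem_powersetCard] at hS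
      simp only [Finset.mem_coe, Finset.mem_powersetCard]
      exact ⟨Finset.subset_univ _, by rw [Finset.card_sdiff_of_subset hS.2, hS.1.2, hU]⟩
    · intro S hS T hT hET
      rw [Finset.coe_filter, Set.mem_setOf_eq] at hS hT
      have h2 : S \ U = T \ U := hET
      rw [← Finset.sdiff_union_of_subset hS.2, h2, Finset.sdiff_union_of_subset hT.2]
  rwa [Finset.card_powersetCard, Finset.card_univ, Fintype.card_fin] at h

lemma sigma1_le :
    ∑ S ∈ (Finset.univ : Finset (Fin n)).powersetCard m,
      ∑ T ∈ (Finset.univ : Finset (Fin n)).powersetCard m, (S ∩ T).card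
      ≤ n * (n.choose (m - 1)) ^ 2 := by
  have hid : ∀ S T : Finset (Fin n), (S ∩ T).card
      = ∑ i ∈ (Finset.univ : Finset (Fin n)),
          (if i ∈ S then 1 else 0) * (if i ∈ T then 1 else 0) := by
    intro S T
    have h1 : S ∩ T = Finset.univ.filter (fun i => i ∈ S ∧ i ∈ T) := by
      ext i; simp [Finset.mem_inter]
    rw [h1, Finset.card_filter]
    refine Finset.sum_congr rfl fun i _ => ?_
    by_cases h1 : i ∈ S <;> by_cases h2 : i ∈ T <;> simp [h1, h2]
  calc ∑ S ∈ (Finset.univ : Finset (Fin n)).powersetCard m,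
        ∑ T ∈ (Finset.univ : Finset (Fin n)).powersetCard m, (S ∩ T).card
      = ∑ S ∈ (Finset.univ : Finset (Fin n)).powersetCard m,
        ∑ T ∈ (Finset.univ : Finset (Fin n)).powersetCard m,
        ∑ i ∈ (Finset.univ : Finset (Fin n)),
          (if i ∈ S then 1 else 0) * (if i ∈ T then 1 else 0) := by
        simp_rw [hid]
    _ = ∑ i ∈ (Finset.univ : Finset (Fin n)),
        ∑ S ∈ (Finset.univ : Finset (Fin n)).powersetCard m,
        ∑ T ∈ (Finset.univ : Finset (Fin n)).powersetCard m,
          (if i ∈ S then 1 else 0) * (if i ∈ T then 1 else 0) := triple_swap _ _ _ _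
    _ = ∑ i ∈ (Finset.univ : Finset (Fin n)),
        (∑ S ∈ (Finset.univ : Finset (Fin n)).powersetCard m, if i ∈ S then 1 else 0) *
        (∑ T ∈ (Finset.univ : Finset (Fin n)).powersetCard m, if i ∈ T then 1 else 0) := by
        refine Finset.sum_congr rfl fun i _ => ?_
        rw [Finset.sum_mul_sum]
    _ = ∑ i ∈ (Finset.univ : Finset (Fin n)),
        ((((Finset.univ : Finset (Fin n)).powersetCard m).filter fun S => i ∈ S).card) *
        ((((Finset.univ : Finset (Fin n)).powersetCard m).filter fun S => i ∈ S).card) := by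
        refine Finset.sum_congr rfl fun i _ => ?_
        rw [← Finset.card_filter]
    _ ≤ ∑ _i ∈ (Finset.univ : Finset (Fin n)), (n.choose (m-1)) * (n.choose (m-1)) :=
        Finset.sum_le_sum fun i _ => Nat.mul_le_mul (count_through_le i) (count_through_le i)
    _ = n * (n.choose (m - 1)) ^ 2 := by
        rw [Finset.sum_const, Finset.card_univ, Fintype.card_fin, smul_eq_mul, sq]

lemma sigma2_le :
    ∑ S ∈ (Finset.univ : Finset (Fin n)).powersetCard m,
      ∑ T ∈ (Finset.univ : Finset (Fin n)).powersetCard m, ((S ∩ T).card.choose 2)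
      ≤ n.choose 2 * (n.choose (m - 2)) ^ 2 := by
  have hid : ∀ S T : Finset (Fin n), ((S ∩ T).card.choose 2)
      = ∑ U ∈ (Finset.univ : Finset (Fin n)).powersetCard 2,
          (if U ⊆ S then 1 else 0) * (if U ⊆ T then 1 else 0) := by
    intro S T
    have h1 : (S ∩ T).card.choose 2 = ((S ∩ T).powersetCard 2).card := by
      rw [Finset.card_powersetCard]
    rw [h1, powersetCard_eq_filter_univ, Finset.card_filter]
    refine Finset.sum_congr rfl fun U _ => ?_
    by_cases h1 : U ⊆ S <;> by_cases h2 : U ⊆ T <;>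
      simp [h1, h2, Finset.subset_inter_iff]
  calc ∑ S ∈ (Finset.univ : Finset (Fin n)).powersetCard m,
        ∑ T ∈ (Finset.univ : Finset (Fin n)).powersetCard m, ((S ∩ T).card.choose 2)
      = ∑ S ∈ (Finset.univ : Finset (Fin n)).powersetCard m,
        ∑ T ∈ (Finset.univ : Finset (Fin n)).powersetCard m,
        ∑ U ∈ (Finset.univ : Finset (Fin n)).powersetCard 2,
          (if U ⊆ S then 1 else 0) * (if U ⊆ T then 1 else 0) := by
        simp_rw [hid]
    _ = ∑ U ∈ (Finset.univ : Finset (Fin n)).powersetCard 2,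
        ∑ S ∈ (Finset.univ : Finset (Fin n)).powersetCard m,
        ∑ T ∈ (Finset.univ : Finset (Fin n)).powersetCard m,
          (if U ⊆ S then 1 else 0) * (if U ⊆ T then 1 else 0) := triple_swap _ _ _ _
    _ = ∑ U ∈ (Finset.univ : Finset (Fin n)).powersetCard 2,
        (∑ S ∈ (Finset.univ : Finset (Fin n)).powersetCard m, if U ⊆ S then 1 else 0) *
        (∑ T ∈ (Finset.univ : Finset (Fin n)).powersetCard m, if U ⊆ T then 1 else 0) := by
        refine Finset.sum_congr rfl fun U _ => ?_
        rw [Finset.sum_mul_sum]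
    _ = ∑ U ∈ (Finset.univ : Finset (Fin n)).powersetCard 2,
        ((((Finset.univ : Finset (Fin n)).powersetCard m).filter fun S => U ⊆ S).card) *
        ((((Finset.univ : Finset (Fin n)).powersetCard m).filter fun S => U ⊆ S).card) := by
        refine Finset.sum_congr rfl fun U _ => ?_
        rw [← Finset.card_filter]
    _ ≤ ∑ _U ∈ (Finset.univ : Finset (Fin n)).powersetCard 2,
          (n.choose (m-2)) * (n.choose (m-2)) := by
        refine Finset.sum_le_sum fun U hU => ?_
        have hU2 := (Finset.mem_powersetCard.mp hU).2
        exact Nat.mul_le_mul (count_pair_le U hU2) (count_pair_le U hU2)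
    _ = n.choose 2 * (n.choose (m - 2)) ^ 2 := by
        rw [Finset.sum_const, Finset.card_powersetCard, Finset.card_univ, Fintype.card_fin,
          smul_eq_mul, sq]

lemma sigma2_zero (hm : m = 1) :
    ∑ S ∈ (Finset.univ : Finset (Fin n)).powersetCard m,
      ∑ T ∈ (Finset.univ : Finset (Fin n)).powersetCard m, ((S ∩ T).card.choose 2) = 0 := by
  refine Finset.sum_eq_zero fun S hS => Finset.sum_eq_zero fun T hT => ?_
  have hScard := (Finset.mem_powersetCard.mp hS).2
  have : (S ∩ T).card ≤ 1 := by
    calc (S ∩ T).card ≤ S.card := Finset.card_le_card Finset.inter_subset_left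
      _ = 1 := by rw [hScard, hm]
  exact Nat.choose_eq_zero_of_lt (by omega)

/-- pointwise bound `2^k - 1 ≤ k + 2^m * C(k,2)` for `k ≤ m` -/
lemma pow_two_bound {k : ℕ} (hk : k ≤ m) :
    (2:ℤ) ^ k - 1 ≤ (k : ℤ) + 2 ^ m * (k.choose 2 : ℕ) := by
  have hN : 2 ^ k ≤ 1 + k + 2 ^ m * k.choose 2 := by
    match k with
    | 0 => simp
    | 1 => simp
    | (j+2) =>
      have h1 : 1 ≤ (j+2).choose 2 := Nat.choose_pos (by omega)
      have h2 : 2 ^ (j+2) ≤ 2 ^ m := Nat.pow_le_pow_right (by omega) hk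
      have h3 : 2 ^ m ≤ 2 ^ m * (j+2).choose 2 := Nat.le_mul_of_pos_right _ (by omega)
      omega
  have := (Int.ofNat_le.mpr hN)
  push_cast at this ⊢
  linarith

/-- the master bound on `W` -/
lemma W_le_int :
    ∑ S ∈ (Finset.univ : Finset (Fin n)).powersetCard m,
      ∑ T ∈ (Finset.univ : Finset (Fin n)).powersetCard m, ((2:ℤ) ^ ((S ∩ T).card) - 1)
    ≤ ((∑ S ∈ (Finset.univ : Finset (Fin n)).powersetCard m,
        ∑ T ∈ (Finset.univ : Finset (Fin n)).powersetCard m, (S ∩ T).card : ℕ) : ℤ)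
      + 2 ^ m * ((∑ S ∈ (Finset.univ : Finset (Fin n)).powersetCard m,
        ∑ T ∈ (Finset.univ : Finset (Fin n)).powersetCard m, ((S ∩ T).card.choose 2) : ℕ) : ℤ)
      := by
  push_cast
  rw [Finset.mul_sum, ← Finset.sum_add_distrib]
  refine Finset.sum_le_sum fun S hS => ?_
  rw [Finset.mul_sum, ← Finset.sum_add_distrib]
  refine Finset.sum_le_sum fun T hT => ?_
  have hScard := (Finset.mem_powersetCard.mp hS).2
  have hk : (S ∩ T).card ≤ m := by
    calc (S ∩ T).card ≤ S.card := Finset.card_le_card Finset.inter_subset_left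
      _ = m := hScard
  have := pow_two_bound (m := m) hk
  push_cast at this
  linarith

end Counts

section Asymptotics

lemma pow_of_rpow (b : ℝ) (hb : 0 ≤ b) (e : ℝ) (k : ℕ) :
    (b ^ e) ^ k = b ^ (e * k) := by
  rw [← Real.rpow_natCast (b ^ e) k, ← Real.rpow_mul hb]

/-- the eventual arithmetic inequality -/
lemma eventually_EV (m : ℕ) (hm : 1 ≤ m) (ε : ℝ) (hε0 : 0 < ε) (hε1 : ε < 1) :
    ∀ᶠ n : ℕ in atTop,
      (1 - ε) ^ (2 * m) * (1 + (2 ^ m * ((m-1).factorial : ℝ) ^ 2) / n) + 3 * (1/4 : ℝ) ^ n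
        < (1 - ((m * (n:ℝ) ^ (m-1) + 1) / 2 ^ n)) ^ 3 := by
  set B : ℝ := 2 ^ m * ((m-1).factorial : ℝ) ^ 2 with hB
  have hL : Tendsto (fun n : ℕ =>
      (1 - ε) ^ (2 * m) * (1 + B / n) + 3 * (1/4 : ℝ) ^ n) atTop
      (𝓝 ((1 - ε) ^ (2 * m) * (1 + 0) + 3 * 0)) := by
    refine Tendsto.add (Tendsto.const_mul _ (Tendsto.const_add _ ?_))
      (Tendsto.const_mul _ ?_)
    · exact tendsto_const_div_atTop_nhds_zero_nat B
    · exact tendsto_pow_atTop_nhds_zero_of_lt_one (by norm_num) (by norm_num)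
  have hdelta : Tendsto (fun n : ℕ => (m * (n:ℝ) ^ (m-1) + 1) / 2 ^ n) atTop (𝓝 0) := by
    have h1 : Tendsto (fun n : ℕ => (m:ℝ) * ((n:ℝ) ^ (m-1) / 2 ^ n) + 1 / 2 ^ n) atTop
        (𝓝 ((m:ℝ) * 0 + 0)) := by
      refine Tendsto.add (Tendsto.const_mul _ ?_) ?_
      · exact tendsto_pow_const_div_const_pow_of_one_lt (m-1) (by norm_num)
      · have := tendsto_pow_atTop_nhds_zero_of_lt_one
          (by norm_num : (0:ℝ) ≤ 1/2) (by norm_num : (1/2:ℝ) < 1)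
        refine this.congr fun n => ?_
        rw [div_pow, one_pow]
    rw [mul_zero, add_zero] at h1
    refine h1.congr fun n => ?_
    field_simp
  have hR : Tendsto (fun n : ℕ =>
      (1 - ((m * (n:ℝ) ^ (m-1) + 1) / 2 ^ n)) ^ 3) atTop (𝓝 ((1 - 0) ^ 3)) :=
    Tendsto.pow (Tendsto.const_sub _ hdelta) 3
  have hlt : (1 - ε) ^ (2 * m) * (1 + 0) + 3 * 0 < (1 - (0:ℝ)) ^ 3 := by
    have h1 : (1 - ε) ^ (2 * m) < 1 :=
      pow_lt_one₀ (by linarith) (by linarith) (by omega)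
    norm_num
    linarith
  exact hL.eventually_lt hR hlt

/-- the per-`n` algebraic identity step -/
lemma alg_step (m : ℕ) (hm : 1 ≤ m) (ε : ℝ) (n : ℕ) (hn : 2 * m ≤ n) (hn1 : 1 ≤ n)
    (hEV : (1 - ε) ^ (2 * m) * (1 + (2 ^ m * ((m-1).factorial : ℝ) ^ 2) / n)
        + 3 * (1/4 : ℝ) ^ n
        < (1 - ((m * (n:ℝ) ^ (m-1) + 1) / 2 ^ n)) ^ 3) :
    12 * (2:ℝ) ^ (2 * (n - m)) *
        ((1 - ε) *
          ((2 : ℝ) ^ (1 - 1 / (m : ℝ)) * ((m - 1).factorial : ℝ) ^ (1 / (m : ℝ)) /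
            (3 : ℝ) ^ (1 / (2 * (m : ℝ)))) *
          (2 : ℝ) ^ ((n : ℝ) / (m : ℝ)) / (n : ℝ) ^ (1 - 1 / (2 * (m : ℝ)))) ^ (2 * m) *
        ((n:ℝ) ^ (2*m-1) / ((m-1).factorial : ℝ) ^ 2 + 2 ^ m * (n:ℝ) ^ (2*m-2))
      + 3 * 4 ^ n
      < 2 ^ n * ((2:ℝ) ^ n - (m * (n:ℝ) ^ (m-1) + 1)) ^ 3 := by
  have hm0 : (m:ℝ) ≠ 0 := by positivity
  have hn0 : (0:ℝ) < n := by exact_mod_cast hn1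
  set F : ℝ := ((m-1).factorial : ℝ) with hF
  have hF0 : (0:ℝ) < F := by rw [hF]; exact_mod_cast (m-1).factorial_pos
  set p : ℝ := (2:ℝ) ^ n with hp
  have hp0 : (0:ℝ) < p := by positivity
  set q : ℝ := (n:ℝ) ^ (2*m-2) with hq
  have hq0 : (0:ℝ) < q := by positivity
  set r : ℝ := (2:ℝ) ^ (2*m-2) with hr
  have hr0 : (0:ℝ) < r := by positivity
  set t : ℝ := (2:ℝ) ^ m with ht
  set u : ℝ := m * (n:ℝ) ^ (m-1) + 1 with hu
  -- power identities
  have e1 : (2:ℝ) ^ (2 * (n - m)) * (4 * r) = p ^ 2 := by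
    rw [hr, hp, show (4:ℝ) = 2^2 by norm_num, ← pow_add, ← pow_add, ← pow_mul]
    congr 1
    omega
  have e2 : (4:ℝ) ^ n = p ^ 2 := by
    rw [hp, show (4:ℝ) = 2^2 by norm_num, ← pow_mul, ← pow_mul]
    congr 1
    omega
  have e4 : (n:ℝ) ^ (2*m-1) = n * q := by
    rw [hq, ← pow_succ']
    congr 1
    omega
  -- the 2m-th power of the target expression
  have hA : ((2:ℝ) ^ ((1:ℝ) - 1 / (m:ℝ))) ^ (2*m) = r := by
    rw [pow_of_rpow 2 (by norm_num), hr]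
    rw [show ((1:ℝ) - 1/(m:ℝ)) * (2*m : ℕ) = ((2*m - 2 : ℕ) : ℝ) by
      push_cast [Nat.cast_sub (by omega : 2 ≤ 2*m)]
      field_simp
      try ring]
    rw [Real.rpow_natCast]
  have hB : (F ^ ((1:ℝ) / (m:ℝ))) ^ (2*m) = F ^ 2 := by
    rw [pow_of_rpow F hF0.le]
    rw [show ((1:ℝ)/(m:ℝ)) * (2*m : ℕ) = ((2:ℕ) : ℝ) by push_cast; field_simp; try ring]
    rw [Real.rpow_natCast]
  have hC : ((3:ℝ) ^ ((1:ℝ) / (2*(m:ℝ)))) ^ (2*m) = 3 := by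
    rw [pow_of_rpow 3 (by norm_num)]
    rw [show ((1:ℝ)/(2*(m:ℝ))) * (2*m : ℕ) = 1 by push_cast; field_simp]
    rw [Real.rpow_one]
  have hD : ((2:ℝ) ^ ((n:ℝ) / (m:ℝ))) ^ (2*m) = p ^ 2 := by
    rw [pow_of_rpow 2 (by norm_num)]
    rw [show ((n:ℝ)/(m:ℝ)) * (2*m : ℕ) = ((2*n : ℕ) : ℝ) by push_cast; field_simp; try ring]
    rw [Real.rpow_natCast, hp, ← pow_mul]
    ring_nf
  have hE : ((n:ℝ) ^ ((1:ℝ) - 1 / (2*(m:ℝ)))) ^ (2*m) = n * q := by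
    rw [pow_of_rpow _ (by positivity)]
    rw [show ((1:ℝ) - 1/(2*(m:ℝ))) * (2*m : ℕ) = ((2*m - 1 : ℕ) : ℝ) by
      push_cast [Nat.cast_sub (by omega : 1 ≤ 2*m)]
      field_simp
      try ring]
    rw [Real.rpow_natCast, e4]
  have hT : ((1 - ε) *
        ((2 : ℝ) ^ (1 - 1 / (m : ℝ)) * F ^ (1 / (m : ℝ)) /
          (3 : ℝ) ^ (1 / (2 * (m : ℝ)))) *
        (2 : ℝ) ^ ((n : ℝ) / (m : ℝ)) / (n : ℝ) ^ (1 - 1 / (2 * (m : ℝ)))) ^ (2 * m)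
      = (1 - ε) ^ (2*m) * (r * F^2 / 3) * p^2 / (n * q) := by
    rw [div_pow, mul_pow, mul_pow, div_pow, mul_pow]
    rw [hA, hB, hC, hD, hE]
    try ring
  rw [hT, e2]
  -- rewrite the EV hypothesis
  have h14 : (1/4 : ℝ) ^ n = 1 / p ^ 2 := by
    rw [div_pow, one_pow, e2.symm]
    try norm_num
  rw [h14] at hEV
  have hdel : (m * (n:ℝ) ^ (m-1) + 1) / 2 ^ n = u / p := rfl
  rw [hdel] at hEV
  have hrhs : (p * (p - u) ^ 3) = p ^ 4 * (1 - u/p) ^ 3 := by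
    field_simp
  have hgoal2 : 12 * (2:ℝ) ^ (2 * (n - m)) *
      ((1 - ε) ^ (2*m) * (r * F^2 / 3) * p^2 / (n * q)) * (n * q / F^2 + t * q)
      = p ^ 4 * ((1 - ε) ^ (2*m) * (1 + t * F^2 / n)) := by
    have e1' : (2:ℝ) ^ (2 * (n - m)) = p^2 / (4 * r) := by
      rw [← e1]
      field_simp
    rw [e1']
    field_simp
    ring
  have hev2 := mul_lt_mul_of_pos_left hEV (by positivity : (0:ℝ) < p ^ 4)
  have hln : p ^ 4 * ((1 - ε) ^ (2 * m) * (1 + 2 ^ m * F ^ 2 / ↑n) + 3 * (1 / p ^ 2))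
      = p ^ 4 * ((1 - ε) ^ (2*m) * (1 + t * F^2 / n)) + 3 * p ^ 2 := by
    rw [ht]
    field_simp
  rw [hln] at hev2
  calc 12 * (2:ℝ) ^ (2 * (n - m)) *
      ((1 - ε) ^ (2*m) * (r * F^2 / 3) * p^2 / (n * q)) *
      ((n:ℝ) ^ (2*m-1) / F ^ 2 + 2 ^ m * (n:ℝ) ^ (2*m-2)) + 3 * p ^ 2
      = p ^ 4 * ((1 - ε) ^ (2*m) * (1 + t * F^2 / n)) + 3 * p ^ 2 := by
        rw [e4, ← hq, ← ht, hgoal2]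
    _ < p ^ 4 * (1 - u / p) ^ 3 := hev2
    _ = p * (p - u) ^ 3 := hrhs.symm
    _ = 2 ^ n * ((2:ℝ) ^ n - (m * (n:ℝ) ^ (m-1) + 1)) ^ 3 := by rw [← hp, ← hu]

end Asymptotics

-- new material starts here

lemma sigma2_le_pow {n m : ℕ} (hm2 : 2 ≤ m) :
    ∑ S ∈ (Finset.univ : Finset (Fin n)).powersetCard m,
      ∑ T ∈ (Finset.univ : Finset (Fin n)).powersetCard m, ((S ∩ T).card.choose 2)
      ≤ n ^ (2*m-2) := by
  calc ∑ S ∈ (Finset.univ : Finset (Fin n)).powersetCard m,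
        ∑ T ∈ (Finset.univ : Finset (Fin n)).powersetCard m, ((S ∩ T).card.choose 2)
      ≤ n.choose 2 * (n.choose (m - 2)) ^ 2 := sigma2_le
    _ ≤ n ^ 2 * (n ^ (m-2)) ^ 2 :=
        Nat.mul_le_mul (Nat.choose_le_pow n 2)
          (Nat.pow_le_pow_left (Nat.choose_le_pow n (m-2)) 2)
    _ = n ^ (2*m-2) := by
        rw [← pow_mul, ← pow_add]
        congr 1
        omega

lemma W_real (n m : ℕ) (hm : 1 ≤ m) (hn1 : 1 ≤ n) :
    ∑ S ∈ (Finset.univ : Finset (Fin n)).powersetCard m,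
      ∑ T ∈ (Finset.univ : Finset (Fin n)).powersetCard m, ((2:ℝ) ^ ((S ∩ T).card) - 1)
      ≤ (n:ℝ) ^ (2*m-1) / ((m-1).factorial : ℝ) ^ 2 + 2 ^ m * (n:ℝ) ^ (2*m-2) := by
  set F : ℝ := ((m-1).factorial : ℝ) with hF
  have hF0 : (0:ℝ) < F := by rw [hF]; exact_mod_cast (m-1).factorial_pos
  have hn0 : (0:ℝ) < (n:ℝ) := by exact_mod_cast hn1
  have step1 : ∑ S ∈ (Finset.univ : Finset (Fin n)).powersetCard m,
      ∑ T ∈ (Finset.univ : Finset (Fin n)).powersetCard m, ((2:ℝ) ^ ((S ∩ T).card) - 1)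
      ≤ ((∑ S ∈ (Finset.univ : Finset (Fin n)).powersetCard m,
          ∑ T ∈ (Finset.univ : Finset (Fin n)).powersetCard m, (S ∩ T).card : ℕ) : ℝ)
        + 2 ^ m * ((∑ S ∈ (Finset.univ : Finset (Fin n)).powersetCard m,
          ∑ T ∈ (Finset.univ : Finset (Fin n)).powersetCard m,
            ((S ∩ T).card.choose 2) : ℕ) : ℝ) := by
    push_cast
    rw [Finset.mul_sum, ← Finset.sum_add_distrib]
    refine Finset.sum_le_sum fun S hS => ?_
    rw [Finset.mul_sum, ← Finset.sum_add_distrib]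
    refine Finset.sum_le_sum fun T hT => ?_
    have hk : (S ∩ T).card ≤ m := by
      calc (S ∩ T).card ≤ S.card := Finset.card_le_card Finset.inter_subset_left
        _ = m := (Finset.mem_powersetCard.mp hS).2
    have h := pow_two_bound (m := m) hk
    have h2 := (@Int.cast_le ℝ _ _ _).mpr h
    push_cast at h2
    linarith
  have main1 : ((∑ S ∈ (Finset.univ : Finset (Fin n)).powersetCard m,
      ∑ T ∈ (Finset.univ : Finset (Fin n)).powersetCard m, (S ∩ T).card : ℕ) : ℝ)
      ≤ (n:ℝ) ^ (2*m-1) / F ^ 2 := by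
    have h1 : ((∑ S ∈ (Finset.univ : Finset (Fin n)).powersetCard m,
        ∑ T ∈ (Finset.univ : Finset (Fin n)).powersetCard m, (S ∩ T).card : ℕ) : ℝ)
        ≤ ((n * (n.choose (m - 1)) ^ 2 : ℕ) : ℝ) := by
      exact_mod_cast sigma1_le
    have hch : ((n.choose (m-1)) : ℝ) ≤ (n:ℝ) ^ (m-1) / F := by
      rw [hF]
      exact Nat.choose_le_pow_div (m-1) n
    have h2 : ((n * (n.choose (m - 1)) ^ 2 : ℕ) : ℝ) ≤ (n:ℝ) * ((n:ℝ)^(m-1)/F) ^ 2 := by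
      push_cast
      refine mul_le_mul_of_nonneg_left ?_ hn0.le
      exact pow_le_pow_left₀ (by positivity) hch 2
    have h3 : (n:ℝ) * ((n:ℝ)^(m-1)/F) ^ 2 = (n:ℝ) ^ (2*m-1) / F ^ 2 := by
      rw [div_pow, ← pow_mul]
      rw [show (n:ℝ) * ((n:ℝ) ^ ((m-1)*2) / F ^ 2) = (n:ℝ)^(1 + (m-1)*2) / F^2 by
        rw [pow_add, pow_one]; ring]
      congr 2
      omega
    linarith
  have main2 : 2 ^ m * ((∑ S ∈ (Finset.univ : Finset (Fin n)).powersetCard m,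
      ∑ T ∈ (Finset.univ : Finset (Fin n)).powersetCard m,
        ((S ∩ T).card.choose 2) : ℕ) : ℝ) ≤ 2 ^ m * (n:ℝ) ^ (2*m-2) := by
    refine mul_le_mul_of_nonneg_left ?_ (by positivity)
    rcases Nat.lt_or_ge m 2 with h2 | h2
    · have hm1 : m = 1 := by omega
      rw [sigma2_zero hm1]
      simp
    · exact_mod_cast sigma2_le_pow h2
  calc _ ≤ _ := step1
    _ ≤ _ := add_le_add main1 main2

theorem main_bound (m : ℕ) (hm : 1 ≤ m) (ε : ℝ) (hε0 : 0 < ε) (hε1 : ε < 1) :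
    ∃ n₀ : ℕ, ∀ n : ℕ, n₀ ≤ n → ∀ M : ℤ, ∀ a : Fin n → ℤ,
      (∀ i, 0 ≤ a i ∧ a i ≤ M) →
      (∀ A₁ A₂ : Finset (Fin n), A₁ ≠ A₂ → m ≤ A₁.card → m ≤ A₂.card →
        mthEval n m a A₁ ≠ mthEval n m a A₂) →
      (M : ℝ) > (1 - ε) *
        ((2 : ℝ) ^ (1 - 1 / (m : ℝ)) * ((m - 1).factorial : ℝ) ^ (1 / (m : ℝ)) /
          (3 : ℝ) ^ (1 / (2 * (m : ℝ)))) *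
        (2 : ℝ) ^ ((n : ℝ) / (m : ℝ)) / (n : ℝ) ^ (1 - 1 / (2 * (m : ℝ))) := by
  have hev : ∀ᶠ n : ℕ in atTop,
      ((1 - ε) ^ (2 * m) * (1 + (2 ^ m * ((m-1).factorial : ℝ) ^ 2) / n) + 3 * (1/4 : ℝ) ^ n
        < (1 - ((m * (n:ℝ) ^ (m-1) + 1) / 2 ^ n)) ^ 3) ∧ 2 * m ≤ n ∧ 1 ≤ n :=
    (eventually_EV m hm ε hε0 hε1).and ((eventually_ge_atTop (2*m)).and (eventually_ge_atTop 1))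
  obtain ⟨n₀, hn₀⟩ := eventually_atTop.mp hev
  refine ⟨n₀, fun n hn M a ha hd => ?_⟩
  obtain ⟨hEV, hn2m, hn1⟩ := hn₀ n hn
  have hm0 : (m:ℝ) ≠ 0 := by positivity
  have hn0 : (0:ℝ) < (n:ℝ) := by exact_mod_cast hn1
  set F : ℝ := ((m-1).factorial : ℝ) with hF
  have hF0 : (0:ℝ) < F := by rw [hF]; exact_mod_cast (m-1).factorial_pos
  have hM0 : (0:ℤ) ≤ M := le_trans (ha ⟨0, by omega⟩).1 (ha ⟨0, by omega⟩).2
  have hx0 : (0:ℝ) ≤ (M:ℝ) := by exact_mod_cast hM0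
  -- cast master inequality to ℝ
  have hmaster := master a hm hn2m M ha hd
  have hmR := (@Int.cast_le ℝ _ _ _).mpr hmaster
  push_cast at hmR
  set K : ℕ := (((Finset.univ : Finset (Fin n)).powerset.filter
      fun A => m ≤ A.card).card) with hK
  -- positivity of 1 - δ
  have hpu : (0:ℝ) < 1 - ((m * (n:ℝ) ^ (m-1) + 1) / 2 ^ n) := by
    by_contra hcon
    push_neg at hcon
    have h3 : ((1:ℝ) - ((m * (n:ℝ) ^ (m-1) + 1) / 2 ^ n)) ^ 3 ≤ 0 :=
      Odd.pow_nonpos (by decide) hcon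
    have t1 : (0:ℝ) ≤ (1 - ε) ^ (2 * m) := (even_two_mul m).pow_nonneg _
    have t2 : (0:ℝ) < 3 * (1/4 : ℝ) ^ n := by positivity
    have t3 : (0:ℝ) ≤ (2 ^ m * F ^ 2) / n := by positivity
    have t4 : (0:ℝ) ≤ (1 - ε) ^ (2 * m) * (1 + (2 ^ m * F ^ 2) / n) :=
      mul_nonneg t1 (by linarith)
    linarith
  have hp0 : (0:ℝ) < (2:ℝ) ^ n := by positivity
  have hup : (m * (n:ℝ) ^ (m-1) + 1) < 2 ^ n := by
    have := (div_lt_one hp0).mp (by linarith)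
    exact this
  -- K is large
  have hKn : 2 ^ n ≤ K + m * n ^ (m-1) := by
    have hsplit := Finset.card_filter_add_card_filter_not
      (s := (Finset.univ : Finset (Fin n)).powerset) (p := fun A => m ≤ A.card)
    have hbad := card_bad_le (n := n) (m := m) hn1
    have hpow : (Finset.univ : Finset (Fin n)).powerset.card = 2 ^ n := by
      rw [Finset.card_powerset, Finset.card_univ, Fintype.card_fin]
    omega
  have hKR : (2:ℝ) ^ n ≤ (K:ℝ) + m * (n:ℝ) ^ (m-1) := by exact_mod_cast hKn
  have hK1 : 1 ≤ K := by
    rcases Nat.eq_zero_or_pos K with h0 | h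
    · exfalso
      rw [h0] at hKR
      push_cast at hKR
      linarith
    · exact h
  -- cube bound
  have hcube := cube_le_three_sum_sq K
  have hcR : ((K:ℝ) - 1) ^ 3 ≤ 3 * ∑ i ∈ Finset.range K, (i:ℝ) ^ 2 := by
    have h := (Nat.cast_le (α := ℝ)).mpr hcube
    push_cast [Nat.cast_sub hK1] at h
    exact h
  -- W bound
  have hWr := W_real n m hm hn1
  rw [← hF] at hWr
  set Wb : ℝ := (n:ℝ) ^ (2*m-1) / F ^ 2 + 2 ^ m * (n:ℝ) ^ (2*m-2) with hWb
  have hWb0 : (0:ℝ) < Wb := by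
    rw [hWb]
    have h1 : (0:ℝ) < 2 ^ m * (n:ℝ) ^ (2*m-2) := by
      refine mul_pos (by positivity) (pow_pos hn0 _)
    have h2 : (0:ℝ) ≤ (n:ℝ) ^ (2*m-1) / F ^ 2 := by positivity
    linarith
  -- the long chain
  have hchain : (2:ℝ) ^ n * ((2:ℝ) ^ n - (m * (n:ℝ) ^ (m-1) + 1)) ^ 3
      ≤ 12 * (2:ℝ) ^ (2 * (n - m)) * (M:ℝ) ^ (2*m) * Wb + 3 * 4 ^ n := by
    have c1 : (2:ℝ) ^ n - (m * (n:ℝ) ^ (m-1) + 1) ≤ (K:ℝ) - 1 := by linarith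
    have c2 : (0:ℝ) ≤ (2:ℝ) ^ n - (m * (n:ℝ) ^ (m-1) + 1) := by linarith
    have c3 : ((2:ℝ) ^ n - (m * (n:ℝ) ^ (m-1) + 1)) ^ 3 ≤ ((K:ℝ) - 1) ^ 3 :=
      pow_le_pow_left₀ c2 c1 3
    have c4 : (2:ℝ) ^ n * ((2:ℝ) ^ n - (m * (n:ℝ) ^ (m-1) + 1)) ^ 3
        ≤ (2:ℝ) ^ n * (3 * ∑ i ∈ Finset.range K, (i:ℝ) ^ 2) := by
      refine mul_le_mul_of_nonneg_left (le_trans c3 hcR) hp0.le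
    have c5 : (2:ℝ) ^ n * (3 * ∑ i ∈ Finset.range K, (i:ℝ) ^ 2)
        = 3 * ((2:ℝ) ^ n * ∑ i ∈ Finset.range K, (i:ℝ) ^ 2) := by ring
    have c6 : (M:ℝ) ^ (2*m) *
        (∑ S ∈ (Finset.univ : Finset (Fin n)).powersetCard m,
          ∑ T ∈ (Finset.univ : Finset (Fin n)).powersetCard m,
            ((2:ℝ) ^ ((S ∩ T).card) - 1))
        ≤ (M:ℝ) ^ (2*m) * Wb :=
      mul_le_mul_of_nonneg_left hWr (pow_nonneg hx0 _)
    have c7 := mul_le_mul_of_nonneg_left c6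
      (by positivity : (0:ℝ) ≤ 4 * (2:ℝ) ^ (2 * (n - m)))
    -- combine with hmR
    linarith [hmR, c4, c7]
  -- algebraic step
  have halg := alg_step m hm ε n hn2m hn1 hEV
  rw [← hF] at halg
  -- conclude
  by_contra hcon
  push_neg at hcon
  have hTnn : (0:ℝ) ≤ (M:ℝ) := hx0
  have hpowle : (M:ℝ) ^ (2*m) ≤ ((1 - ε) *
      ((2 : ℝ) ^ (1 - 1 / (m : ℝ)) * F ^ (1 / (m : ℝ)) /
        (3 : ℝ) ^ (1 / (2 * (m : ℝ)))) *
      (2 : ℝ) ^ ((n : ℝ) / (m : ℝ)) / (n : ℝ) ^ (1 - 1 / (2 * (m : ℝ)))) ^ (2*m) :=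
    pow_le_pow_left₀ hx0 hcon (2*m)
  have hcoef : (0:ℝ) ≤ 12 * (2:ℝ) ^ (2 * (n - m)) * Wb :=
    mul_nonneg (by positivity) hWb0.le
  have hmul := mul_le_mul_of_nonneg_left hpowle hcoef
  rw [← hWb] at halg
  generalize hT2 : ((1 - ε) *
      ((2 : ℝ) ^ (1 - 1 / (m : ℝ)) * F ^ (1 / (m : ℝ)) /
        (3 : ℝ) ^ (1 / (2 * (m : ℝ)))) *
      (2 : ℝ) ^ ((n : ℝ) / (m : ℝ)) / (n : ℝ) ^ (1 - 1 / (2 * (m : ℝ)))) ^ (2*m) = T2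
    at halg hmul
  generalize hC3 : ((2:ℝ) ^ n - ((m:ℝ) * (n:ℝ) ^ (m-1) + 1)) ^ 3 = C3 at halg hchain
  generalize hP2 : (2:ℝ) ^ (2*(n-m)) = P2 at halg hchain hmul
  generalize hP4 : (4:ℝ) ^ n = P4 at halg hchain
  generalize hPn : (2:ℝ) ^ n = Pn at halg hchain
  linarith [halg, hchain, hmul]

end SMVAux

theorem stmt0 (m : ℕ) (hm : 1 ≤ m) (ε : ℝ) (hε : 0 < ε) :
    ∃ n₀ : ℕ, ∀ n : ℕ, n₀ ≤ n → ∀ M : ℤ, ∀ a : Fin n → ℤ,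
      (∀ i, 0 ≤ a i ∧ a i ≤ M) →
      (∀ A₁ A₂ : Finset (Fin n), A₁ ≠ A₂ → m ≤ A₁.card → m ≤ A₂.card →
        mthEval n m a A₁ ≠ mthEval n m a A₂) →
      (M : ℝ) > (1 - ε) *
        ((2 : ℝ) ^ (1 - 1 / (m : ℝ)) * ((m - 1).factorial : ℝ) ^ (1 / (m : ℝ)) /
          (3 : ℝ) ^ (1 / (2 * (m : ℝ)))) *
        (2 : ℝ) ^ ((n : ℝ) / (m : ℝ)) / (n : ℝ) ^ (1 - 1 / (2 * (m : ℝ))) := by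
  have hε'0 : 0 < min ε (1/2) := lt_min hε (by norm_num)
  have hε'1 : min ε (1/2) < 1 := lt_of_le_of_lt (min_le_right _ _) (by norm_num)
  obtain ⟨n₀, h⟩ := SMVAux.main_bound m hm (min ε (1/2)) hε'0 hε'1
  refine ⟨n₀, fun n hn M a ha hd => ?_⟩
  have h1 := h n hn M a ha hd
  have hnn : (0:ℝ) ≤ ((2 : ℝ) ^ (1 - 1 / (m : ℝ)) * ((m - 1).factorial : ℝ) ^ (1 / (m : ℝ)) /
      (3 : ℝ) ^ (1 / (2 * (m : ℝ)))) * (2 : ℝ) ^ ((n : ℝ) / (m : ℝ)) /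
      (n : ℝ) ^ (1 - 1 / (2 * (m : ℝ))) := by positivity
  have hεε : 1 - ε ≤ 1 - min ε (1/2) := by
    have := min_le_left ε (1/2); linarith
  have hle : (1 - ε) *
      ((2 : ℝ) ^ (1 - 1 / (m : ℝ)) * ((m - 1).factorial : ℝ) ^ (1 / (m : ℝ)) /
        (3 : ℝ) ^ (1 / (2 * (m : ℝ)))) *
      (2 : ℝ) ^ ((n : ℝ) / (m : ℝ)) / (n : ℝ) ^ (1 - 1 / (2 * (m : ℝ)))
      ≤ (1 - min ε (1/2)) *
      ((2 : ℝ) ^ (1 - 1 / (m : ℝ)) * ((m - 1).factorial : ℝ) ^ (1 / (m : ℝ)) /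
        (3 : ℝ) ^ (1 / (2 * (m : ℝ)))) *
      (2 : ℝ) ^ ((n : ℝ) / (m : ℝ)) / (n : ℝ) ^ (1 - 1 / (2 * (m : ℝ))) := by
    calc (1 - ε) *
        ((2 : ℝ) ^ (1 - 1 / (m : ℝ)) * ((m - 1).factorial : ℝ) ^ (1 / (m : ℝ)) /
          (3 : ℝ) ^ (1 / (2 * (m : ℝ)))) *
        (2 : ℝ) ^ ((n : ℝ) / (m : ℝ)) / (n : ℝ) ^ (1 - 1 / (2 * (m : ℝ)))
        = (1 - ε) * (((2 : ℝ) ^ (1 - 1 / (m : ℝ)) * ((m - 1).factorial : ℝ) ^ (1 / (m : ℝ)) /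
          (3 : ℝ) ^ (1 / (2 * (m : ℝ)))) *
        (2 : ℝ) ^ ((n : ℝ) / (m : ℝ)) / (n : ℝ) ^ (1 - 1 / (2 * (m : ℝ)))) := by ring
      _ ≤ (1 - min ε (1/2)) *
          (((2 : ℝ) ^ (1 - 1 / (m : ℝ)) * ((m - 1).factorial : ℝ) ^ (1 / (m : ℝ)) /
          (3 : ℝ) ^ (1 / (2 * (m : ℝ)))) *
        (2 : ℝ) ^ ((n : ℝ) / (m : ℝ)) / (n : ℝ) ^ (1 - 1 / (2 * (m : ℝ)))) :=
          mul_le_mul_of_nonneg_right hεε hnn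
      _ = _ := by ring
  exact lt_of_le_of_lt hle h1
end

section
/- For every integer m ≥ 1 and every real ε > 0 there exists n₀ such that for all n ≥ n₀ the following holds: if Σ = (a_1, …, a_n) is a sequence of real numbers with every a_i ∈ [0, M] such that |e^m_Σ(A₁) − e^m_Σ(A₂)| ≥ 1 for all distinct subsets A₁, A₂ ⊆ {1, …, n} with |A₁|, |A₂| ≥ m, then M > (1 − ε) · (2^{1 − 1/m} · ((m−1)!)^{1/m} / 3^{1/(2m)}) · 2^{n/m} / n^{1 − 1/(2m)}. -/
set_option maxHeartbeats 1000000

open Finset Filter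

section aux

lemma count_supersets {n m : ℕ} (Q : Finset (Fin n)) :
    ((univ.powersetCard m).filter (fun S => Q ⊆ S)).card ≤ (n - Q.card).choose (m - Q.card) := by
  have h : ((univ.powersetCard m).filter (fun S => Q ⊆ S)).card
      ≤ ((univ \ Q).powersetCard (m - Q.card)).card := by
    apply Finset.card_le_card_of_injOn (fun S => S \ Q)
    · intro S hS
      simp only [mem_coe, mem_filter, mem_powersetCard] at hS
      obtain ⟨⟨-, hcard⟩, hQS⟩ := hS
      rw [mem_coe, mem_powersetCard]
      exact ⟨sdiff_subset_sdiff (subset_univ _) le_rfl, by rw [card_sdiff_of_subset hQS, hcard]⟩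
    · intro S₁ h₁ S₂ h₂ h
      simp only [coe_filter, Set.mem_setOf_eq] at h₁ h₂
      have e1 := sdiff_union_of_subset h₁.2
      have e2 := sdiff_union_of_subset h₂.2
      simp only at h
      rw [← e1, ← e2, h]
  rwa [card_powersetCard, card_sdiff_of_subset (subset_univ Q), card_univ, Fintype.card_fin] at h

lemma count_containing {n : ℕ} (S : Finset (Fin n)) :
    (univ.powerset.filter (fun A => S ⊆ A)).card = 2 ^ (n - S.card) := by
  have h : (univ.powerset.filter (fun A => S ⊆ A)).card = (univ \ S).powerset.card := by
    apply Finset.card_bij' (fun A _ => A \ S) (fun B _ => B ∪ S)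
    · intro A hA
      simp only [mem_filter, mem_powerset] at hA ⊢
      exact sdiff_subset_sdiff (subset_univ _) le_rfl
    · intro B hB
      simp only [mem_powerset] at hB
      simp only [mem_filter, mem_powerset]
      exact ⟨subset_univ _, subset_union_right⟩
    · intro A hA
      simp only [mem_filter, mem_powerset] at hA
      exact sdiff_union_of_subset hA.2
    · intro B hB
      simp only [mem_powerset] at hB
      rw [union_sdiff_right, sdiff_eq_self_of_disjoint]
      exact disjoint_right.mpr fun {a} haS haB => (mem_sdiff.mp (hB haB)).2 haS
  rw [h, card_powerset, card_sdiff_of_subset (subset_univ S), card_univ, Fintype.card_fin]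




lemma sum_sq_diff_le_var (Y : Finset ℝ) (μ : ℝ) :
    ∑ y ∈ Y, ∑ z ∈ Y, (y - z)^2 ≤ 2 * Y.card * ∑ y ∈ Y, (y - μ)^2 := by
  have inner : ∀ y : ℝ, ∑ z ∈ Y, (y-z)^2
      = (Y.card : ℝ)*(y-μ)^2 + (∑ z ∈ Y, (z-μ)^2) - 2*((y-μ)*(∑ z ∈ Y, (z-μ))) := by
    intro y
    have h : ∀ z : ℝ, (y - z)^2 = (y-μ)^2 + ((z-μ)^2 - 2*((y-μ)*(z-μ))) := by intros; ring
    rw [sum_congr rfl fun z _ => h z, sum_add_distrib, sum_sub_distrib, sum_const,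
      ← mul_sum, ← mul_sum, nsmul_eq_mul]
    ring
  rw [sum_congr rfl fun y (_ : y ∈ Y) => inner y, sum_sub_distrib, sum_add_distrib,
    ← mul_sum, sum_const, ← mul_sum, ← sum_mul, nsmul_eq_mul]
  nlinarith [sq_nonneg (∑ y ∈ Y, (y-μ))]

lemma sum_range_id_real (t : ℕ) : ∑ i ∈ range t, (i:ℝ) = t*(t-1)/2 := by
  induction t with
  | zero => simp
  | succ t ih => rw [sum_range_succ, ih]; push_cast; ring

lemma sum_range_sq_real (t : ℕ) : ∑ i ∈ range t, (i:ℝ)^2 = t*(t-1)*(2*t-1)/6 := by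
  induction t with
  | zero => simp
  | succ t ih => rw [sum_range_succ, ih]; push_cast; ring

lemma sum_sq_diff_range (t : ℕ) :
    ∑ i ∈ range t, ∑ j ∈ range t, ((i:ℝ)-(j:ℝ))^2 = t^2*(t^2-1)/6 := by
  have exp : ∀ i j : ℕ, ((i:ℝ)-(j:ℝ))^2 = (i:ℝ)^2 - 2*((i:ℝ)*(j:ℝ)) + (j:ℝ)^2 := by
    intros; ring
  simp only [exp, sum_add_distrib, sum_sub_distrib, ← mul_sum, ← sum_mul, sum_const,
    card_range, nsmul_eq_mul]
  rw [sum_range_id_real, sum_range_sq_real]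
  ring

lemma rank_sep (Y : Finset ℝ) (t : ℕ) (ht : Y.card = t)
    (hsep : ∀ y ∈ Y, ∀ z ∈ Y, y ≠ z → 1 ≤ |y - z|) :
    ∑ i ∈ range t, ∑ j ∈ range t, ((i:ℝ) - (j:ℝ))^2 ≤ ∑ y ∈ Y, ∑ z ∈ Y, (y - z)^2 := by
  set e := Y.orderIsoOfFin ht with he
  have key : ∀ k : ℕ, ∀ i j : Fin t, (j:ℕ) = (i:ℕ) + k → (k:ℝ) ≤ (e j : ℝ) - (e i : ℝ) := by
    intro k
    induction k with
    | zero =>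
      intro i j hij
      have : i = j := Fin.ext (by omega)
      rw [this]; simp
    | succ k ih =>
      intro i j hij
      have hj' : (i:ℕ) + k < t := by omega
      set j' : Fin t := ⟨(i:ℕ)+k, hj'⟩ with hj'def
      have h1 : (k:ℝ) ≤ (e j' : ℝ) - (e i : ℝ) := ih i j' rfl
      have hlt : e j' < e j := e.strictMono (show j' < j by
        rw [Fin.lt_def]; show (i:ℕ)+k < (j:ℕ); omega)
      have hltR : (e j' : ℝ) < (e j : ℝ) := hlt
      have hsep' : 1 ≤ |(e j : ℝ) - (e j' : ℝ)| :=
        hsep _ (e j).2 _ (e j').2 (by exact_mod_cast hltR.ne')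
      rw [abs_of_pos (by linarith)] at hsep'
      push_cast
      linarith
  have key2 : ∀ i j : Fin t, (((i:ℕ):ℝ) - ((j:ℕ):ℝ))^2 ≤ ((e i : ℝ) - (e j : ℝ))^2 := by
    intro i j
    rcases le_total (i:ℕ) (j:ℕ) with h | h
    · have h1 : (0:ℝ) ≤ ((j:ℕ):ℝ) - ((i:ℕ):ℝ) := by
        have : ((i:ℕ):ℝ) ≤ ((j:ℕ):ℝ) := Nat.cast_le.mpr h
        linarith
      have h2 : ((j:ℕ):ℝ) - ((i:ℕ):ℝ) ≤ (e j : ℝ) - (e i : ℝ) := by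
        have := key ((j:ℕ) - (i:ℕ)) i j (by omega)
        push_cast [Nat.cast_sub h] at this ⊢
        linarith
      nlinarith
    · have h1 : (0:ℝ) ≤ ((i:ℕ):ℝ) - ((j:ℕ):ℝ) := by
        have : ((j:ℕ):ℝ) ≤ ((i:ℕ):ℝ) := Nat.cast_le.mpr h
        linarith
      have h2 : ((i:ℕ):ℝ) - ((j:ℕ):ℝ) ≤ (e i : ℝ) - (e j : ℝ) := by
        have := key ((i:ℕ) - (j:ℕ)) j i (by omega)
        push_cast [Nat.cast_sub h] at this ⊢
        linarith
      nlinarith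
  have hsum : ∀ f : ℝ → ℝ, ∑ y ∈ Y, f y = ∑ i : Fin t, f (e i) := by
    intro f
    rw [← Finset.sum_attach Y f]
    exact (Equiv.sum_comp e.toEquiv fun x => f ↑x).symm
  rw [hsum (fun y => ∑ z ∈ Y, (y - z)^2)]
  have : ∀ i : Fin t, ∑ z ∈ Y, ((e i : ℝ) - z)^2 = ∑ j : Fin t, ((e i : ℝ) - (e j : ℝ))^2 :=
    fun i => hsum (fun z => ((e i : ℝ) - z)^2)
  simp only [this]
  rw [← Fin.sum_univ_eq_sum_range (fun i => ∑ j ∈ range t, ((i:ℝ) - (j:ℝ))^2) t]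
  refine sum_le_sum fun i _ => ?_
  rw [← Fin.sum_univ_eq_sum_range (fun j => (((i:ℕ):ℝ) - (j:ℝ))^2) t]
  exact sum_le_sum fun j _ => key2 i j



lemma core_arith {ε K nr N t : ℝ} (m2 : ℕ) (hm2 : 1 ≤ m2)
    (hε0 : 0 < ε) (hε1 : ε < 1) (hK : 0 ≤ K) (hn1 : 1 ≤ nr) (hN1 : 1 ≤ N)
    (htN : t ≤ N) (htlow : N - (ε/8)*N ≤ t)
    (hc2 : K ≤ (ε/8)*nr) (hc3 : 8/ε ≤ N^2) :
    (1-ε)^m2 * N^3 * (nr + K) < (t^3 - t) * nr := by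
  have hε1' : (0:ℝ) ≤ 1 - ε := by linarith
  have hA0 : (0:ℝ) < N^3 := by positivity
  have hnr0 : (0:ℝ) < nr := by linarith
  have h1 : (1-ε)^m2 ≤ (1-ε) := by
    have := pow_le_pow_of_le_one hε1' (by linarith) hm2
    simpa using this
  have h1b : (0:ℝ) ≤ (1-ε)^m2 := by positivity
  have ht0 : (0:ℝ) < t := by nlinarith
  have ht3 : (1 - 3*(ε/8)) * N^3 ≤ t^3 := by
    have h2' : (1 - ε/8) * N ≤ t := by linarith
    have h3' : (0:ℝ) ≤ (1 - ε/8) * N := by nlinarith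
    have hp := pow_le_pow_left₀ h3' h2' 3
    have hco : (0:ℝ) ≤ ((1-ε/8)^3 - (1 - 3*(ε/8))) * N^3 := by
      have : (0:ℝ) ≤ (1-ε/8)^3 - (1 - 3*(ε/8)) := by nlinarith [sq_nonneg ε]
      positivity
    nlinarith [hp]
  have htup : t ≤ (ε/8) * N^3 := by
    have h8 : 8 ≤ ε * N^2 := by rw [div_le_iff₀ hε0] at hc3; nlinarith
    nlinarith [mul_le_mul_of_nonneg_right h8 (by linarith : (0:ℝ) ≤ N)]
  have hsum : nr + K ≤ (1 + ε/8) * nr := by nlinarith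
  have g2 : (0:ℝ) ≤ nr + K := by linarith
  have f1 : (1-ε)^m2 * N^3 ≤ (1-ε) * N^3 := mul_le_mul_of_nonneg_right h1 hA0.le
  have f2 : (1-ε)*N^3*(nr+K) ≤ (1-ε)*N^3*((1+ε/8)*nr) :=
    mul_le_mul_of_nonneg_left hsum (mul_nonneg hε1' hA0.le)
  have f3 : (1-ε)^m2*N^3*(nr+K) ≤ (1-ε)*N^3*((1+ε/8)*nr) :=
    (mul_le_mul_of_nonneg_right f1 g2).trans f2
  have r1 : (1 - ε/2)*N^3 ≤ t^3 - t := by linarith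
  have r2 : (1-ε/2)*N^3*nr ≤ (t^3-t)*nr := mul_le_mul_of_nonneg_right r1 hnr0.le
  have hAnr : (0:ℝ) < N^3 * nr := mul_pos hA0 hnr0
  have strict : (1-ε)*N^3*((1+ε/8)*nr) < (1-ε/2)*N^3*nr := by
    nlinarith [mul_pos hAnr hε0, mul_nonneg hAnr.le (sq_nonneg ε)]
  linarith

lemma rpow_pow_nat {x : ℝ} (hx : 0 < x) (r : ℝ) (k : ℕ) :
    (x ^ r) ^ k = x ^ (r * k) := by
  rw [← Real.rpow_natCast (x ^ r) k, ← Real.rpow_mul hx.le]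

lemma rhs_pow {m n : ℕ} (hm : 1 ≤ m) (hn : 1 ≤ n) (c : ℝ) (hc : 0 ≤ c) :
    (c * ((2:ℝ)^((1:ℝ) - 1/(m:ℝ)) * (((m-1).factorial:ℝ))^((1:ℝ)/(m:ℝ)) /
        (3:ℝ)^((1:ℝ)/(2*(m:ℝ)))) *
      (2:ℝ)^((n:ℝ)/(m:ℝ)) / (n:ℝ)^((1:ℝ) - 1/(2*(m:ℝ)))) ^ (2*m)
    = c^(2*m) * ((2:ℝ)^(2*m-2) * (((m-1).factorial:ℝ))^2 / 3) * (2:ℝ)^(2*n)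
        / (n:ℝ)^(2*m-1) := by
  have hm0 : (m:ℝ) ≠ 0 := by
    have : (0:ℝ) < m := by exact_mod_cast hm
    exact this.ne'
  have h2 : (0:ℝ) < 2 := two_pos
  have h3 : (0:ℝ) < 3 := by norm_num
  have hF : (0:ℝ) < ((m-1).factorial:ℝ) := by exact_mod_cast (m-1).factorial_pos
  have hnR : (0:ℝ) < (n:ℝ) := by exact_mod_cast hn
  rw [div_pow, mul_pow, mul_pow, div_pow, mul_pow]
  rw [rpow_pow_nat h2, rpow_pow_nat hF, rpow_pow_nat h3, rpow_pow_nat h2, rpow_pow_nat hnR]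
  have f1 : (2:ℝ) ^ (((1:ℝ) - 1/(m:ℝ)) * ((2*m : ℕ):ℝ)) = 2^(2*m-2 : ℕ) := by
    rw [← Real.rpow_natCast 2 (2*m-2)]
    congr 1
    rw [Nat.cast_sub (by omega : 2 ≤ 2*m)]
    push_cast
    field_simp
  have f2 : ((m-1).factorial:ℝ) ^ (((1:ℝ)/(m:ℝ)) * ((2*m : ℕ):ℝ))
      = ((m-1).factorial:ℝ)^(2 : ℕ) := by
    rw [← Real.rpow_natCast _ 2]
    congr 1
    push_cast
    field_simp
  have f3 : (3:ℝ) ^ (((1:ℝ)/(2*(m:ℝ))) * ((2*m : ℕ):ℝ)) = 3 := by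
    rw [show ((1:ℝ)/(2*(m:ℝ))) * ((2*m : ℕ):ℝ) = 1 by push_cast; field_simp, Real.rpow_one]
  have f4 : (2:ℝ) ^ (((n:ℝ)/(m:ℝ)) * ((2*m : ℕ):ℝ)) = 2^(2*n : ℕ) := by
    rw [← Real.rpow_natCast 2 (2*n)]
    congr 1
    push_cast
    field_simp
  have f5 : (n:ℝ) ^ (((1:ℝ) - 1/(2*(m:ℝ))) * ((2*m : ℕ):ℝ)) = (n:ℝ)^(2*m-1 : ℕ) := by
    rw [← Real.rpow_natCast _ (2*m-1)]
    congr 1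
    rw [Nat.cast_sub (by omega : 1 ≤ 2*m)]
    push_cast
    field_simp
  rw [f1, f2, f3, f4, f5]


lemma sum_choose_inter {n m k : ℕ} :
    ∑ S ∈ (univ : Finset (Fin n)).powersetCard m, ∑ T ∈ (univ : Finset (Fin n)).powersetCard m,
        (((S ∩ T).card.choose k : ℕ) : ℝ)
      ≤ (n.choose k : ℝ) * ((n - k).choose (m - k) : ℝ) ^ 2 := by
  have key : ∀ S T : Finset (Fin n), (((S ∩ T).card.choose k : ℕ) : ℝ)
      = ∑ Q ∈ (univ : Finset (Fin n)).powersetCard k,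
          (if Q ⊆ S then (1 : ℝ) else 0) * (if Q ⊆ T then (1 : ℝ) else 0) := by
    intro S T
    have hit : ∀ Q : Finset (Fin n),
        (if Q ⊆ S then (1 : ℝ) else 0) * (if Q ⊆ T then (1 : ℝ) else 0)
        = if Q ⊆ S ∩ T then (1 : ℝ) else 0 := by
      intro Q
      by_cases h1 : Q ⊆ S <;> by_cases h2 : Q ⊆ T <;> simp [h1, h2, subset_inter_iff]
    simp only [hit, sum_boole]
    have hfil : ((univ : Finset (Fin n)).powersetCard k).filter (fun Q => Q ⊆ S ∩ T)
        = (S ∩ T).powersetCard k := by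
      ext Q
      simp only [mem_filter, mem_powersetCard, subset_univ, true_and]
      tauto
    rw [hfil, card_powersetCard]
  simp only [key]
  rw [sum_congr rfl fun S (_ : S ∈ (univ : Finset (Fin n)).powersetCard m) => sum_comm, sum_comm]
  simp only [← mul_sum, ← sum_mul]
  have hbound : ∀ Q ∈ (univ : Finset (Fin n)).powersetCard k,
      (∑ S ∈ (univ : Finset (Fin n)).powersetCard m, if Q ⊆ S then (1 : ℝ) else 0)
        * (∑ T ∈ (univ : Finset (Fin n)).powersetCard m, if Q ⊆ T then (1 : ℝ) else 0)
      ≤ ((n - k).choose (m - k) : ℝ) ^ 2 := by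
    intro Q hQ
    have hc : (∑ S ∈ (univ : Finset (Fin n)).powersetCard m, if Q ⊆ S then (1 : ℝ) else 0)
        = ((((univ : Finset (Fin n)).powersetCard m).filter (fun S => Q ⊆ S)).card : ℝ) := by
      rw [sum_boole]
    have hle : ((((univ : Finset (Fin n)).powersetCard m).filter (fun S => Q ⊆ S)).card : ℝ)
        ≤ ((n - k).choose (m - k) : ℝ) := by
      have := count_supersets (n := n) (m := m) Q
      rw [(mem_powersetCard.mp hQ).2] at this
      exact_mod_cast this
    rw [hc, sq]
    exact mul_le_mul hle hle (by positivity) (by positivity)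
  calc ∑ Q ∈ (univ : Finset (Fin n)).powersetCard k, _ ≤ ∑ Q ∈ (univ : Finset (Fin n)).powersetCard k,
        ((n - k).choose (m - k) : ℝ) ^ 2 := sum_le_sum hbound
    _ = (n.choose k : ℝ) * ((n - k).choose (m - k) : ℝ) ^ 2 := by
        rw [sum_const, card_powersetCard, card_univ, Fintype.card_fin, nsmul_eq_mul]


lemma two_pow_bound {m j : ℕ} (hj : j ≤ m) :
    (2 : ℝ) ^ j - 1 ≤ (j : ℝ) + 2 ^ m * (j.choose 2 : ℝ) := by
  match j with
  | 0 => norm_num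
  | 1 => norm_num
  | (j+2) =>
    have h1 : (2:ℝ)^(j+2) ≤ 2^m := pow_le_pow_right₀ (by norm_num) hj
    have h2 : (1:ℝ) ≤ ((j+2).choose 2 : ℝ) := by
      exact_mod_cast Nat.one_le_iff_ne_zero.mpr (Nat.choose_pos (by omega)).ne'
    have h3 : (0:ℝ) ≤ ((j:ℕ):ℝ) + 2 := by positivity
    nlinarith [pow_nonneg (by norm_num : (0:ℝ) ≤ 2) m]

lemma pair_count {n m : ℕ} (hm : 1 ≤ m) :
    ∑ S ∈ (univ : Finset (Fin n)).powersetCard m, ∑ T ∈ (univ : Finset (Fin n)).powersetCard m,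
        ((2 : ℝ) ^ (S ∩ T).card - 1)
      ≤ (n : ℝ) ^ (2*m-1) / ((m-1).factorial : ℝ) ^ 2 + 2 ^ m * (n : ℝ) ^ (2*m-2) := by
  have hcP : ∀ S ∈ (univ : Finset (Fin n)).powersetCard m, (S : Finset (Fin n)).card = m :=
    fun S hS => (mem_powersetCard.mp hS).2
  -- pointwise bound
  have step1 : ∑ S ∈ (univ : Finset (Fin n)).powersetCard m,
        ∑ T ∈ (univ : Finset (Fin n)).powersetCard m, ((2 : ℝ) ^ (S ∩ T).card - 1)
      ≤ ∑ S ∈ (univ : Finset (Fin n)).powersetCard m,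
        ∑ T ∈ (univ : Finset (Fin n)).powersetCard m,
          (((S ∩ T).card : ℝ) + 2 ^ m * ((S ∩ T).card.choose 2 : ℝ)) := by
    refine sum_le_sum fun S hS => sum_le_sum fun T hT => ?_
    exact two_pow_bound ((card_le_card inter_subset_left).trans_eq (hcP S hS))
  -- A bound
  have hA := sum_choose_inter (n := n) (m := m) (k := 1)
  simp only [Nat.choose_one_right] at hA
  have hchoose1 : ((n-1).choose (m-1) : ℝ) ≤ (n:ℝ)^(m-1) / ((m-1).factorial : ℝ) := by
    refine (Nat.choose_le_pow_div (m-1) (n-1)).trans ?_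
    gcongr
    exact_mod_cast Nat.sub_le n 1
  have hA' : (n : ℝ) * ((n-1).choose (m-1) : ℝ)^2 ≤ (n:ℝ)^(2*m-1)/((m-1).factorial : ℝ)^2 := by
    calc (n : ℝ) * ((n-1).choose (m-1) : ℝ)^2
        ≤ (n : ℝ) * ((n:ℝ)^(m-1) / ((m-1).factorial : ℝ))^2 := by
          exact mul_le_mul_of_nonneg_left
            (pow_le_pow_left₀ (Nat.cast_nonneg _) hchoose1 2) (Nat.cast_nonneg n)
      _ = (n:ℝ)^(2*m-1)/((m-1).factorial : ℝ)^2 := by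
          rw [div_pow, ← pow_mul, mul_div_assoc', ← pow_succ']
          congr 2
          omega
  -- B bound
  have hB : ∑ S ∈ (univ : Finset (Fin n)).powersetCard m,
        ∑ T ∈ (univ : Finset (Fin n)).powersetCard m, (((S ∩ T).card.choose 2 : ℕ) : ℝ)
      ≤ (n:ℝ)^(2*m-2) := by
    rcases Nat.lt_or_ge m 2 with h2 | h2
    · have : ∀ S ∈ (univ : Finset (Fin n)).powersetCard m,
          ∀ T ∈ (univ : Finset (Fin n)).powersetCard m, (S ∩ T).card.choose 2 = 0 := by
        intro S hS T hT
        exact Nat.choose_eq_zero_of_lt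
          (lt_of_le_of_lt ((card_le_card inter_subset_left).trans_eq (hcP S hS)) h2)
      calc _ ≤ (0:ℝ) := by
            apply le_of_eq
            refine sum_eq_zero fun S hS => sum_eq_zero fun T hT => ?_
            rw [this S hS T hT]; norm_num
        _ ≤ (n:ℝ)^(2*m-2) := by positivity
    · refine (sum_choose_inter (n := n) (m := m) (k := 2)).trans ?_
      have hBnat : n.choose 2 * ((n-2).choose (m-2))^2 ≤ n ^ (2*m-2) := by
        have ha : n.choose 2 ≤ n ^ 2 := Nat.choose_le_pow n 2
        have hb : (n-2).choose (m-2) ≤ n ^ (m-2) :=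
          (Nat.choose_le_pow _ _).trans (Nat.pow_le_pow_left (Nat.sub_le n 2) _)
        calc n.choose 2 * ((n-2).choose (m-2))^2 ≤ n^2 * (n^(m-2))^2 :=
              Nat.mul_le_mul ha (Nat.pow_le_pow_left hb 2)
          _ = n ^ (2*m-2) := by rw [← pow_mul, ← pow_add]; congr 1; omega
      calc (n.choose 2 : ℝ) * ((n - 2).choose (m - 2) : ℝ) ^ 2
          = ((n.choose 2 * ((n-2).choose (m-2))^2 : ℕ) : ℝ) := by push_cast; ring
        _ ≤ (n:ℝ)^(2*m-2) := by exact_mod_cast hBnat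
  refine step1.trans ?_
  calc ∑ S ∈ (univ : Finset (Fin n)).powersetCard m,
        ∑ T ∈ (univ : Finset (Fin n)).powersetCard m,
          (((S ∩ T).card : ℝ) + 2 ^ m * ((S ∩ T).card.choose 2 : ℝ))
      = (∑ S ∈ (univ : Finset (Fin n)).powersetCard m,
          ∑ T ∈ (univ : Finset (Fin n)).powersetCard m, ((S ∩ T).card : ℝ))
        + 2^m * ∑ S ∈ (univ : Finset (Fin n)).powersetCard m,
          ∑ T ∈ (univ : Finset (Fin n)).powersetCard m, (((S ∩ T).card.choose 2 : ℕ) : ℝ) := by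
        simp only [sum_add_distrib, mul_sum]
    _ ≤ _ := add_le_add (hA.trans hA') (mul_le_mul_of_nonneg_left hB (by positivity))

end aux

/-- The `m`-th evaluation of the real sequence `a` on the subset `A`:
the sum over all `m`-element subsets of `A` of the product of the entries.
It is `0` when `|A| < m`. -/
noncomputable def mthEvalR (n m : ℕ) (a : Fin n → ℝ) (A : Finset (Fin n)) : ℝ :=
  ∑ S ∈ A.powersetCard m, ∏ i ∈ S, a i

section main

lemma X_eq {n m : ℕ} (a : Fin n → ℝ) (A : Finset (Fin n)) :
    mthEvalR n m a A = ∑ S ∈ univ.powersetCard m, if S ⊆ A then ∏ i ∈ S, a i else 0 := by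
  rw [mthEvalR, ← sum_filter]
  congr 1
  ext S
  simp only [mem_powersetCard, mem_filter, subset_univ, true_and]
  tauto

lemma sum_ite_count {n : ℕ} (S : Finset (Fin n)) (c : ℝ) :
    ∑ A ∈ univ.powerset, (if S ⊆ A then c else 0)
      = (2 : ℝ) ^ (n - S.card) * c := by
  rw [← sum_filter, sum_const, nsmul_eq_mul]
  rw [count_containing]
  push_cast
  ring

lemma sum_X {n m : ℕ} (a : Fin n → ℝ) :
    ∑ A ∈ univ.powerset, mthEvalR n m a A
      = (2 : ℝ) ^ (n - m) * ∑ S ∈ univ.powersetCard m, ∏ i ∈ S, a i := by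
  simp only [X_eq]
  rw [sum_comm, mul_sum]
  refine sum_congr rfl fun S hS => ?_
  rw [sum_ite_count, (mem_powersetCard.mp hS).2]

lemma sum_X_sq {n m : ℕ} (a : Fin n → ℝ) :
    ∑ A ∈ univ.powerset, (mthEvalR n m a A) ^ 2
      = ∑ S ∈ univ.powersetCard m, ∑ T ∈ univ.powersetCard m,
          (∏ i ∈ S, a i) * (∏ i ∈ T, a i) * (2 : ℝ) ^ (n - (S ∪ T).card) := by
  simp only [X_eq, sq, sum_mul_sum]
  rw [sum_comm]
  refine sum_congr rfl fun S _ => ?_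
  rw [sum_comm]
  refine sum_congr rfl fun T _ => ?_
  have : ∀ A : Finset (Fin n),
      (if S ⊆ A then ∏ i ∈ S, a i else 0) * (if T ⊆ A then ∏ i ∈ T, a i else 0)
      = (if S ∪ T ⊆ A then (∏ i ∈ S, a i) * (∏ i ∈ T, a i) else 0) := by
    intro A
    by_cases h1 : S ⊆ A <;> by_cases h2 : T ⊆ A <;>
      simp [h1, h2, union_subset_iff]
  simp only [this, sum_ite_count, mul_comm]


lemma pow_sub_real {k n : ℕ} (h : k ≤ n) : (2 : ℝ) ^ (n - k) = 2 ^ n / 2 ^ k := by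
  rw [eq_div_iff (by positivity), ← pow_add, Nat.sub_add_cancel h]

lemma var_eq {n m : ℕ} (hn : m ≤ n) (a : Fin n → ℝ) :
    ∑ A ∈ univ.powerset,
        (mthEvalR n m a A - (∑ B ∈ univ.powerset, mthEvalR n m a B) / 2 ^ n) ^ 2
      = ∑ S ∈ univ.powersetCard m, ∑ T ∈ univ.powersetCard m,
          (∏ i ∈ S, a i) * (∏ i ∈ T, a i) *
            ((2 : ℝ) ^ n / 2 ^ (2 * m)) * ((2 : ℝ) ^ (S ∩ T).card - 1) := by
  have hN : ((univ.powerset : Finset (Finset (Fin n))).card : ℝ) = 2 ^ n := by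
    rw [card_powerset, card_univ, Fintype.card_fin]; push_cast; ring
  have hN0 : (2 : ℝ) ^ n ≠ 0 := by positivity
  set SX := ∑ B ∈ univ.powerset, mthEvalR n m a B with hSX
  have step1 : ∑ A ∈ univ.powerset,
      (mthEvalR n m a A - SX / 2 ^ n) ^ 2
      = (∑ A ∈ univ.powerset, (mthEvalR n m a A) ^ 2) - SX ^ 2 / 2 ^ n := by
    have : ∀ A : Finset (Fin n), (mthEvalR n m a A - SX / 2 ^ n) ^ 2
        = (mthEvalR n m a A) ^ 2 - (2 * SX / 2 ^ n) * mthEvalR n m a A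
          + (SX / 2 ^ n) ^ 2 := by intro A; ring
    rw [sum_congr rfl fun A _ => this A]
    rw [sum_add_distrib, sum_sub_distrib, ← mul_sum, sum_const, nsmul_eq_mul, hN, ← hSX]
    field_simp
    ring
  rw [step1, sum_X_sq, hSX, sum_X]
  have hcP : ∀ S ∈ univ.powersetCard m, (S : Finset (Fin n)).card = m :=
    fun S hS => (mem_powersetCard.mp hS).2
  have hterm : ∀ S ∈ univ.powersetCard m, ∀ T ∈ univ.powersetCard m,
      (∏ i ∈ S, a i) * (∏ i ∈ T, a i) * ((2 : ℝ) ^ n / 2 ^ (2 * m)) * ((2 : ℝ) ^ (S ∩ T).card - 1)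
      = (∏ i ∈ S, a i) * (∏ i ∈ T, a i) * (2 : ℝ) ^ (n - (S ∪ T).card)
        - (∏ i ∈ S, a i) * (∏ i ∈ T, a i) * ((2 : ℝ) ^ n / 2 ^ (2 * m)) := by
    intro S hS T hT
    have hun : (S ∪ T).card ≤ n := by
      simpa using card_le_card (subset_univ (S ∪ T))
    have hj : (2 : ℝ) ^ (2 * m) = 2 ^ (S ∪ T).card * 2 ^ (S ∩ T).card := by
      rw [← pow_add, card_union_add_card_inter, hcP S hS, hcP T hT, two_mul]
    rw [pow_sub_real hun, hj]
    field_simp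
  symm
  calc ∑ S ∈ univ.powersetCard m, ∑ T ∈ univ.powersetCard m,
        (∏ i ∈ S, a i) * (∏ i ∈ T, a i) * ((2 : ℝ) ^ n / 2 ^ (2 * m)) * ((2 : ℝ) ^ (S ∩ T).card - 1)
      = ∑ S ∈ univ.powersetCard m, ∑ T ∈ univ.powersetCard m,
          ((∏ i ∈ S, a i) * (∏ i ∈ T, a i) * (2 : ℝ) ^ (n - (S ∪ T).card)
            - (∏ i ∈ S, a i) * (∏ i ∈ T, a i) * ((2 : ℝ) ^ n / 2 ^ (2 * m))) :=
        sum_congr rfl fun S hS => sum_congr rfl fun T hT => hterm S hS T hT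
    _ = (∑ S ∈ univ.powersetCard m, ∑ T ∈ univ.powersetCard m,
          (∏ i ∈ S, a i) * (∏ i ∈ T, a i) * (2 : ℝ) ^ (n - (S ∪ T).card))
        - ∑ S ∈ univ.powersetCard m, ∑ T ∈ univ.powersetCard m,
          (∏ i ∈ S, a i) * (∏ i ∈ T, a i) * ((2 : ℝ) ^ n / 2 ^ (2 * m)) := by
        rw [← sum_sub_distrib]
        exact sum_congr rfl fun S _ => sum_sub_distrib _ _
    _ = _ := by
        congr 1
        simp only [← sum_mul]
        rw [mul_pow, pow_two (∑ S ∈ univ.powersetCard m, ∏ i ∈ S, a i), sum_mul_sum,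
          pow_sub_real hn]
        field_simp
        ring


lemma var_le {n m : ℕ} (hm : 1 ≤ m) (hn : m ≤ n) (a : Fin n → ℝ) (M : ℝ) (hM : 0 ≤ M)
    (ha : ∀ i, 0 ≤ a i ∧ a i ≤ M) :
    ∑ A ∈ univ.powerset,
        (mthEvalR n m a A - (∑ B ∈ univ.powerset, mthEvalR n m a B) / 2 ^ n) ^ 2
      ≤ M ^ (2*m) * (((2 : ℝ) ^ n / 2 ^ (2 * m)) *
          ((n : ℝ) ^ (2*m-1) / ((m-1).factorial : ℝ) ^ 2 + 2 ^ m * (n : ℝ) ^ (2*m-2))) := by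
  rw [var_eq hn a]
  have hprod : ∀ S ∈ (univ : Finset (Fin n)).powersetCard m,
      0 ≤ ∏ i ∈ S, a i ∧ (∏ i ∈ S, a i) ≤ M ^ m := by
    intro S hS
    constructor
    · exact prod_nonneg fun i _ => (ha i).1
    · calc ∏ i ∈ S, a i ≤ ∏ i ∈ S, M :=
            prod_le_prod (fun i _ => (ha i).1) (fun i _ => (ha i).2)
      _ = M ^ m := by rw [prod_const, (mem_powersetCard.mp hS).2]
  have step : ∑ S ∈ (univ : Finset (Fin n)).powersetCard m,
        ∑ T ∈ (univ : Finset (Fin n)).powersetCard m,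
          (∏ i ∈ S, a i) * (∏ i ∈ T, a i) *
            ((2 : ℝ) ^ n / 2 ^ (2 * m)) * ((2 : ℝ) ^ (S ∩ T).card - 1)
      ≤ ∑ S ∈ (univ : Finset (Fin n)).powersetCard m,
        ∑ T ∈ (univ : Finset (Fin n)).powersetCard m,
          M ^ (2*m) * (((2 : ℝ) ^ n / 2 ^ (2 * m)) * ((2 : ℝ) ^ (S ∩ T).card - 1)) := by
    refine sum_le_sum fun S hS => sum_le_sum fun T hT => ?_
    have h1 := hprod S hS
    have h2 := hprod T hT
    have hco : (0:ℝ) ≤ (2 : ℝ) ^ n / 2 ^ (2 * m) := by positivity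
    have hit : (0:ℝ) ≤ (2 : ℝ) ^ (S ∩ T).card - 1 := by
      have : (1:ℝ) ≤ 2 ^ (S ∩ T).card := one_le_pow₀ (by norm_num)
      linarith
    have hπ : (∏ i ∈ S, a i) * (∏ i ∈ T, a i) ≤ M ^ (2*m) := by
      calc (∏ i ∈ S, a i) * (∏ i ∈ T, a i) ≤ M^m * M^m :=
            mul_le_mul h1.2 h2.2 h2.1 (by positivity)
        _ = M ^ (2*m) := by rw [← pow_add, two_mul]
    calc (∏ i ∈ S, a i) * (∏ i ∈ T, a i) * ((2 : ℝ) ^ n / 2 ^ (2 * m))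
          * ((2 : ℝ) ^ (S ∩ T).card - 1)
        ≤ M ^ (2*m) * ((2 : ℝ) ^ n / 2 ^ (2 * m)) * ((2 : ℝ) ^ (S ∩ T).card - 1) := by
          have := mul_le_mul_of_nonneg_right (mul_le_mul_of_nonneg_right hπ hco) hit
          linarith [this]
      _ = M ^ (2*m) * (((2 : ℝ) ^ n / 2 ^ (2 * m)) * ((2 : ℝ) ^ (S ∩ T).card - 1)) := by ring
  refine step.trans ?_
  simp only [← mul_sum]
  have hfac : (0:ℝ) ≤ M ^ (2*m) * ((2 : ℝ) ^ n / 2 ^ (2 * m)) := by positivity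
  calc M ^ (2*m) * (((2 : ℝ) ^ n / 2 ^ (2 * m)) *
        ∑ S ∈ (univ : Finset (Fin n)).powersetCard m,
          ∑ T ∈ (univ : Finset (Fin n)).powersetCard m, ((2 : ℝ) ^ (S ∩ T).card - 1))
      ≤ M ^ (2*m) * (((2 : ℝ) ^ n / 2 ^ (2 * m)) *
          ((n : ℝ) ^ (2*m-1) / ((m-1).factorial : ℝ) ^ 2 + 2 ^ m * (n : ℝ) ^ (2*m-2))) := by
        rw [← mul_assoc, ← mul_assoc]
        exact mul_le_mul_of_nonneg_left (pair_count hm) hfac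


lemma var_lower {n m : ℕ} (a : Fin n → ℝ) (μ : ℝ)
    (hsep : ∀ A₁ A₂ : Finset (Fin n), A₁ ≠ A₂ → m ≤ A₁.card → m ≤ A₂.card →
      1 ≤ |mthEvalR n m a A₁ - mthEvalR n m a A₂|) :
    ((((univ : Finset (Fin n)).powerset.filter (fun A => m ≤ A.card)).card : ℝ) *
      (((((univ : Finset (Fin n)).powerset.filter (fun A => m ≤ A.card)).card : ℝ))^2 - 1)) / 12
    ≤ ∑ A ∈ (univ : Finset (Fin n)).powerset, (mthEvalR n m a A - μ)^2 := by
  set T := (univ : Finset (Fin n)).powerset.filter (fun A => m ≤ A.card) with hT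
  set t := T.card with htdef
  have hmemT : ∀ A ∈ T, m ≤ A.card := fun A hA => (mem_filter.mp hA).2
  have hinj : ∀ A₁ ∈ T, ∀ A₂ ∈ T, mthEvalR n m a A₁ = mthEvalR n m a A₂ → A₁ = A₂ := by
    intro A₁ h₁ A₂ h₂ he
    by_contra hne
    have := hsep A₁ A₂ hne (hmemT _ h₁) (hmemT _ h₂)
    rw [he, sub_self, abs_zero] at this
    linarith
  set Y := T.image (mthEvalR n m a) with hY
  have hYcard : Y.card = t := card_image_of_injOn hinj
  have hsepY : ∀ y ∈ Y, ∀ z ∈ Y, y ≠ z → 1 ≤ |y - z| := by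
    intro y hy z hz hne
    obtain ⟨A₁, h₁, rfl⟩ := mem_image.mp hy
    obtain ⟨A₂, h₂, rfl⟩ := mem_image.mp hz
    exact hsep A₁ A₂ (fun h => hne (by rw [h])) (hmemT _ h₁) (hmemT _ h₂)
  have himg : ∑ y ∈ Y, (y - μ)^2 = ∑ A ∈ T, (mthEvalR n m a A - μ)^2 :=
    sum_image hinj
  have c1 : (t:ℝ)^2*((t:ℝ)^2-1)/6 ≤ 2 * t * ∑ y ∈ Y, (y-μ)^2 := by
    calc (t:ℝ)^2*((t:ℝ)^2-1)/6 = ∑ i ∈ range t, ∑ j ∈ range t, ((i:ℝ)-(j:ℝ))^2 :=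
          (sum_sq_diff_range t).symm
      _ ≤ ∑ y ∈ Y, ∑ z ∈ Y, (y - z)^2 := rank_sep Y t hYcard hsepY
      _ ≤ 2 * Y.card * ∑ y ∈ Y, (y - μ)^2 := sum_sq_diff_le_var Y μ
      _ = 2 * t * ∑ y ∈ Y, (y - μ)^2 := by rw [hYcard]
  have c2 : ∑ A ∈ T, (mthEvalR n m a A - μ)^2
      ≤ ∑ A ∈ (univ : Finset (Fin n)).powerset, (mthEvalR n m a A - μ)^2 :=
    sum_le_sum_of_subset_of_nonneg (filter_subset _ _) (fun _ _ _ => sq_nonneg _)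
  have c3 : (t:ℝ)*((t:ℝ)^2-1)/12 ≤ ∑ y ∈ Y, (y-μ)^2 := by
    rcases Nat.eq_zero_or_pos t with h0 | hpos
    · rw [h0]
      push_cast
      norm_num
      exact sum_nonneg fun y _ => sq_nonneg _
    · have htR : (0:ℝ) < t := by exact_mod_cast hpos
      nlinarith [c1]
  calc ((t:ℝ) * ((t:ℝ)^2 - 1)) / 12 ≤ ∑ y ∈ Y, (y-μ)^2 := c3
    _ = ∑ A ∈ T, (mthEvalR n m a A - μ)^2 := himg
    _ ≤ _ := c2

lemma cardT_ge {n m : ℕ} (hn : 1 ≤ n) (hm : 1 ≤ m) :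
    (2:ℕ)^n ≤ ((univ : Finset (Fin n)).powerset.filter (fun A => m ≤ A.card)).card
      + m * n^m := by
  have hsplit : ((univ:Finset (Fin n)).powerset.filter (fun A => m ≤ A.card)).card
      + ((univ:Finset (Fin n)).powerset.filter (fun A => ¬ m ≤ A.card)).card = 2^n := by
    rw [card_filter_add_card_filter_not, card_powerset, card_univ, Fintype.card_fin]
  have hsmall : ((univ:Finset (Fin n)).powerset.filter (fun A => ¬ m ≤ A.card)).card
      ≤ m * n^m := by
    have hsub : (univ:Finset (Fin n)).powerset.filter (fun A => ¬ m ≤ A.card)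
        ⊆ (range m).biUnion (fun k => (univ : Finset (Fin n)).powersetCard k) := by
      intro A hA
      simp only [mem_filter, mem_powerset, not_le] at hA
      rw [mem_biUnion]
      exact ⟨A.card, mem_range.mpr hA.2, mem_powersetCard.mpr ⟨subset_univ _, rfl⟩⟩
    calc ((univ:Finset (Fin n)).powerset.filter (fun A => ¬ m ≤ A.card)).card
        ≤ ((range m).biUnion (fun k => (univ : Finset (Fin n)).powersetCard k)).card :=
          card_le_card hsub
      _ ≤ ∑ k ∈ range m, ((univ : Finset (Fin n)).powersetCard k).card := card_biUnion_le
      _ ≤ ∑ k ∈ range m, n^m := by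
          refine sum_le_sum fun k hk => ?_
          rw [card_powersetCard, card_univ, Fintype.card_fin]
          exact (Nat.choose_le_pow n k).trans
            (Nat.pow_le_pow_right hn (le_of_lt (mem_range.mp hk)))
      _ = m * n^m := by rw [sum_const, card_range, smul_eq_mul]
  omega


theorem stmt1_aux (m : ℕ) (hm : 1 ≤ m) (ε : ℝ) (hε : 0 < ε) (hε1 : ε < 1) :
    ∃ n₀ : ℕ, ∀ n : ℕ, n₀ ≤ n → ∀ M : ℝ, ∀ a : Fin n → ℝ,
      (∀ i, 0 ≤ a i ∧ a i ≤ M) →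
      (∀ A₁ A₂ : Finset (Fin n), A₁ ≠ A₂ → m ≤ A₁.card → m ≤ A₂.card →
        1 ≤ |mthEvalR n m a A₁ - mthEvalR n m a A₂|) →
      M > (1 - ε) *
        ((2 : ℝ) ^ (1 - 1 / (m : ℝ)) * ((m - 1).factorial : ℝ) ^ (1 / (m : ℝ)) /
          (3 : ℝ) ^ (1 / (2 * (m : ℝ)))) *
        (2 : ℝ) ^ ((n : ℝ) / (m : ℝ)) / (n : ℝ) ^ (1 - 1 / (2 * (m : ℝ))) := by
  set F : ℝ := ((m-1).factorial : ℝ) with hF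
  set K : ℝ := F^2 * 2^m with hKdef
  have hFpos : 0 < F := by
    rw [hF]
    exact_mod_cast (m-1).factorial_pos
  have hKpos : 0 ≤ K := by positivity
  -- eventual conditions
  have ev1 : ∀ᶠ n : ℕ in atTop, m ≤ n ∧ 1 ≤ n :=
    (eventually_ge_atTop m).and (eventually_ge_atTop 1)
  have ev2 : ∀ᶠ n : ℕ in atTop, (m:ℝ) * (n:ℝ)^m ≤ (ε/8) * 2^n := by
    have h0 : Tendsto (fun n : ℕ => (n:ℝ)^m / 2^n) atTop (nhds 0) :=
      tendsto_pow_const_div_const_pow_of_one_lt m one_lt_two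
    have hc : (0:ℝ) < ε/(8*m) := by positivity
    filter_upwards [h0.eventually (gt_mem_nhds hc)] with n hn
    have h2n : (0:ℝ) < 2^n := by positivity
    rw [div_lt_iff₀ h2n] at hn
    have hmR : (0:ℝ) < m := by exact_mod_cast hm
    calc (m:ℝ) * (n:ℝ)^m ≤ (m:ℝ) * (ε/(8*m) * 2^n) :=
          mul_le_mul_of_nonneg_left hn.le hmR.le
      _ = (ε/8) * 2^n := by field_simp
  have ev3 : ∀ᶠ n : ℕ in atTop, K ≤ (ε/8) * (n:ℝ) := by
    filter_upwards [tendsto_natCast_atTop_atTop.eventually_ge_atTop (8*K/ε)] with n hn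
    rw [div_le_iff₀ hε] at hn
    nlinarith
  have ev4 : ∀ᶠ n : ℕ in atTop, 8/ε ≤ (2:ℝ)^n := by
    exact (tendsto_pow_atTop_atTop_of_one_lt (by norm_num : (1:ℝ) < 2)).eventually_ge_atTop _
  obtain ⟨n₀, hn₀⟩ := eventually_atTop.1 ((ev1.and ev2).and (ev3.and ev4))
  refine ⟨n₀, fun n hn M a ha hsep => ?_⟩
  obtain ⟨⟨⟨hnm, hn1⟩, hc1⟩, hc2, hc3'⟩ := hn₀ n hn
  have hnR : (0:ℝ) < n := by exact_mod_cast hn1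
  have hnR1 : (1:ℝ) ≤ n := by exact_mod_cast hn1
  have hN1 : (1:ℝ) ≤ 2^n := one_le_pow₀ (by norm_num)
  have hc3 : 8/ε ≤ ((2:ℝ)^n)^2 := by nlinarith
  have hM0 : 0 ≤ M := by
    have := ha ⟨0, by omega⟩
    linarith [this.1, this.2]
  -- variance bounds
  set t : ℕ := ((univ : Finset (Fin n)).powerset.filter (fun A => m ≤ A.card)).card with htdef
  set μ : ℝ := (∑ B ∈ (univ : Finset (Fin n)).powerset, mthEvalR n m a B) / 2 ^ n with hμ
  have h_low : ((t:ℝ) * ((t:ℝ)^2 - 1)) / 12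
      ≤ ∑ A ∈ (univ : Finset (Fin n)).powerset, (mthEvalR n m a A - μ)^2 :=
    var_lower a μ hsep
  have h_up := var_le hm hnm a M hM0 ha
  set U : ℝ := (n : ℝ) ^ (2*m-1) / F ^ 2 + 2 ^ m * (n : ℝ) ^ (2*m-2) with hU
  set c : ℝ := ((2 : ℝ) ^ n / 2 ^ (2 * m)) * U with hcdef
  have hc_pos : 0 < c := by
    rw [hcdef, hU]
    have : (0:ℝ) < (n : ℝ) ^ (2*m-1) / F ^ 2 := by positivity
    have h2 : (0:ℝ) ≤ 2 ^ m * (n : ℝ) ^ (2*m-2) := by positivity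
    have h3 : (0:ℝ) < (2 : ℝ) ^ n / 2 ^ (2 * m) := by positivity
    nlinarith
  have hMlow : ((t:ℝ) * ((t:ℝ)^2 - 1)) / 12 / c ≤ M^(2*m) :=
    (div_le_iff₀ hc_pos).mpr (h_low.trans h_up)
  -- cardinality bounds
  have htN : (t:ℝ) ≤ 2^n := by
    have : t ≤ 2^n := by
      rw [htdef]
      calc ((univ : Finset (Fin n)).powerset.filter (fun A => m ≤ A.card)).card
          ≤ (univ : Finset (Fin n)).powerset.card := card_le_card (filter_subset _ _)
        _ = 2^n := by rw [card_powerset, card_univ, Fintype.card_fin]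
    exact_mod_cast this
  have htlow : (2:ℝ)^n - (ε/8) * 2^n ≤ t := by
    have h := cardT_ge (n := n) (m := m) hn1 hm
    have hcast : (2:ℝ)^n ≤ (t:ℝ) + (m:ℝ) * (n:ℝ)^m := by exact_mod_cast h
    linarith
  -- core inequality
  have hcore := core_arith (ε := ε) (K := K) (nr := (n:ℝ)) (N := (2:ℝ)^n) (t := (t:ℝ))
    (2*m) (by omega) hε hε1 hKpos hnR1 hN1 htN htlow hc2 hc3
  -- Q * c < L
  have hnn : (n:ℝ)^(2*m-1) = (n:ℝ) * (n:ℝ)^(2*m-2) := by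
    rw [← pow_succ']
    congr 1
    omega
  have h2m : (2:ℝ)^(2*m) = 4 * 2^(2*m-2) := by
    rw [show 2*m = 2 + (2*m-2) from by omega, pow_add]
    norm_num
  have h3n : (2:ℝ)^(3*n) = 2^(2*n) * 2^n := by
    rw [show 3*n = 2*n + n from by ring, pow_add]
  set Q : ℝ := (1-ε)^(2*m) * ((2:ℝ)^(2*m-2) * F^2 / 3) * (2:ℝ)^(2*n) / (n:ℝ)^(2*m-1)
    with hQdef
  have hQc : Q * c = (1-ε)^(2*m) * (2:ℝ)^(3*n) * ((n:ℝ) + K) / (12 * n) := by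
    rw [hQdef, hcdef, hU, hKdef, hnn, h2m, h3n]
    have hF0 : F ≠ 0 := hFpos.ne'
    have hn0 : (n:ℝ) ≠ 0 := hnR.ne'
    field_simp
    ring
  have hQL : Q < ((t:ℝ) * ((t:ℝ)^2 - 1)) / 12 / c := by
    rw [lt_div_iff₀ hc_pos, hQc, div_lt_div_iff₀ (by positivity) (by norm_num : (0:ℝ) < 12)]
    have hN3 : ((2:ℝ)^n)^3 = 2^(3*n) := by rw [← pow_mul, mul_comm]
    rw [hN3] at hcore
    have hring : (t:ℝ)*((t:ℝ)^2-1)*(12*(n:ℝ)) = 12*((((t:ℝ))^3-(t:ℝ))*(n:ℝ)) := by ring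
    rw [hring]
    linarith [hcore]
  -- conclude
  have hfinal : Q < M ^ (2*m) := lt_of_lt_of_le hQL hMlow
  refine lt_of_pow_lt_pow_left₀ (2*m) hM0 ?_
  rw [rhs_pow hm hn1 (1-ε) (by linarith)]
  exact hfinal


end main

theorem stmt1 (m : ℕ) (hm : 1 ≤ m) (ε : ℝ) (hε : 0 < ε) :
    ∃ n₀ : ℕ, ∀ n : ℕ, n₀ ≤ n → ∀ M : ℝ, ∀ a : Fin n → ℝ,
      (∀ i, 0 ≤ a i ∧ a i ≤ M) →
      (∀ A₁ A₂ : Finset (Fin n), A₁ ≠ A₂ → m ≤ A₁.card → m ≤ A₂.card →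
        1 ≤ |mthEvalR n m a A₁ - mthEvalR n m a A₂|) →
      M > (1 - ε) *
        ((2 : ℝ) ^ (1 - 1 / (m : ℝ)) * ((m - 1).factorial : ℝ) ^ (1 / (m : ℝ)) /
          (3 : ℝ) ^ (1 / (2 * (m : ℝ)))) *
        (2 : ℝ) ^ ((n : ℝ) / (m : ℝ)) / (n : ℝ) ^ (1 - 1 / (2 * (m : ℝ))) := by
  rcases lt_or_ge ε 1 with hε1 | hε1
  · exact stmt1_aux m hm ε hε hε1
  · obtain ⟨n₀, h⟩ := stmt1_aux m hm (1/2) (by norm_num) (by norm_num)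
    refine ⟨n₀, fun n hn M a ha hsep => ?_⟩
    have hmain := h n hn M a ha hsep
    set P : ℝ := ((2 : ℝ) ^ (1 - 1 / (m : ℝ)) * ((m - 1).factorial : ℝ) ^ (1 / (m : ℝ)) /
          (3 : ℝ) ^ (1 / (2 * (m : ℝ)))) * (2 : ℝ) ^ ((n : ℝ) / (m : ℝ)) /
          (n : ℝ) ^ (1 - 1 / (2 * (m : ℝ))) with hP
    have hP0 : (0:ℝ) ≤ P := by rw [hP]; positivity
    have hrw : ∀ cc : ℝ, cc * ((2 : ℝ) ^ (1 - 1 / (m : ℝ)) *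
          ((m - 1).factorial : ℝ) ^ (1 / (m : ℝ)) / (3 : ℝ) ^ (1 / (2 * (m : ℝ)))) *
          (2 : ℝ) ^ ((n : ℝ) / (m : ℝ)) / (n : ℝ) ^ (1 - 1 / (2 * (m : ℝ))) = cc * P := by
      intro cc; rw [hP]; ring
    rw [hrw] at hmain ⊢
    nlinarith [hmain, mul_le_mul_of_nonneg_right (by linarith : 1 - ε ≤ 1 - (1:ℝ)/2) hP0]
end

section
/- Fix an integer m ≥ 1 and a real λ with 0 < λ < 1/2. For a positive integer n, let A be a subset chosen uniformly at random from F_{λ,n}, let X̄ = C(|A|, m) (the m-th evaluation of the all-ones sequence at A), and let σ̄² = E[X̄²] − (E[X̄])². Then for every ε > 0 there exists n₀ such that for all n ≥ n₀: σ̄² ≤ (1 + ε) · √n · (λn)^{2m−2} / ((m−1)!)². -/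
/-! With `k = ⌊λn⌋`, the variance is at most the mean square deviation of `C(|A|, m)` from
`C(k, m)`. A set of size `k - j` contributes at most `j² · C(k, m-1)²`, while there are at most
`(λ/(1-λ))^j · C(n, k)` such sets, which decays geometrically because `λ < 1/2`. Hence the variance
is at most `C(k, m-1)² · ∑ j² (λ/(1-λ))^j ≤ (λn)^{2m-2}/((m-1)!)² · O(1)`, and the constant is
eventually below `√n`. -/

/-- `Fam n l` is the family `F_{λ,n}` of all subsets of `{1,…,n}` of size at most `λ·n`. -/
noncomputable def Fam (n : ℕ) (l : ℝ) : Finset (Finset (Fin n)) :=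
  Finset.univ.filter (fun A => (A.card : ℝ) ≤ l * n)

open Finset

theorem Nat.choose_le_choose_add_mul_choose_pred {a k : ℕ} (h : a ≤ k) (m : ℕ) :
    k.choose m ≤ a.choose m + (k - a) * k.choose (m - 1) := by
  obtain ⟨d, rfl⟩ := Nat.exists_eq_add_of_le h
  rw [add_tsub_cancel_left]
  cases m with
  | zero => simp
  | succ t =>
    rw [add_tsub_cancel_right]
    clear h
    induction d with
    | zero => simp
    | succ d ih =>
      have hmono : (a + d).choose t ≤ (a + d + 1).choose t := Nat.choose_le_succ (a + d) t
      rw [← add_assoc, Nat.choose_succ_succ']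
      nlinarith

theorem sq_choose_sub_choose_le {a k : ℕ} (h : a ≤ k) (m : ℕ) :
    ((a.choose m : ℝ) - k.choose m) ^ 2 ≤ ((k - a : ℕ) : ℝ) ^ 2 * (k.choose (m - 1) : ℝ) ^ 2 := by
  have hlip : (k.choose m : ℝ) ≤ a.choose m + (k - a : ℕ) * k.choose (m - 1) := by
    exact_mod_cast Nat.choose_le_choose_add_mul_choose_pred h m
  have hmono : (a.choose m : ℝ) ≤ k.choose m := by exact_mod_cast Nat.choose_le_choose m h
  rw [← mul_pow, sub_sq_comm]
  exact pow_le_pow_left₀ (by linarith) (by linarith) 2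

theorem Finset.sum_sq_div_card_sub_sq_le {ι : Type*} (s : Finset ι) (f : ι → ℝ) (c : ℝ) :
    (∑ i ∈ s, f i ^ 2) / #s - ((∑ i ∈ s, f i) / #s) ^ 2 ≤ (∑ i ∈ s, (f i - c) ^ 2) / #s := by
  rcases s.eq_empty_or_nonempty with rfl | hs
  · simp
  have hN : (#s : ℝ) ≠ 0 := by positivity
  have hexpand : ∑ i ∈ s, (f i - c) ^ 2 = ∑ i ∈ s, f i ^ 2 - 2 * c * ∑ i ∈ s, f i + #s * c ^ 2 := by
    have hsq : ∀ i ∈ s, (f i - c) ^ 2 = f i ^ 2 - 2 * c * f i + c ^ 2 := fun i _ => by ring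
    rw [sum_congr rfl hsq, sum_add_distrib, sum_sub_distrib, ← mul_sum, sum_const, nsmul_eq_mul]
  rw [hexpand]
  have key : (∑ i ∈ s, f i ^ 2 - 2 * c * ∑ i ∈ s, f i + #s * c ^ 2) / #s
      - ((∑ i ∈ s, f i ^ 2) / #s - ((∑ i ∈ s, f i) / #s) ^ 2) = ((∑ i ∈ s, f i) / #s - c) ^ 2 := by
    field_simp
    ring
  linarith [sq_nonneg ((∑ i ∈ s, f i) / #s - c)]

theorem Finset.sum_filter_card_le_eq {α M : Type*} [Fintype α] [DecidableEq α] [AddCommMonoid M]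
    (k : ℕ) (g : ℕ → M) :
    ∑ A ∈ univ.filter (fun A : Finset α => #A ≤ k), g #A
      = ∑ i ∈ range (k + 1), (Fintype.card α).choose i • g i := by
  rw [← sum_fiberwise_of_maps_to' (t := range (k + 1)) (g := card) (by simp)]
  refine sum_congr rfl fun i hi => ?_
  have hfib : {A ∈ univ.filter (fun A : Finset α => #A ≤ k) | #A = i} = powersetCard i univ := by
    ext A
    simp only [mem_filter, mem_univ, true_and, mem_powersetCard, subset_univ]
    have := mem_range.mp hi
    omega
  rw [hfib, sum_const, card_powersetCard, card_univ]

theorem one_sub_mul_choose_le_mul_choose_succ {l : ℝ} {n i : ℕ} (hl : l < 1)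
    (hi : (i + 1 : ℝ) ≤ l * n) : (1 - l) * n.choose i ≤ l * n.choose (i + 1) := by
  have hn : (0 : ℝ) < n := by
    rcases Nat.eq_zero_or_pos n with rfl | hn
    · simp at hi; linarith
    · exact_mod_cast hn
  have hin : i ≤ n := by
    have : (i : ℝ) ≤ n := by nlinarith
    exact_mod_cast this
  have hpascal : (n.choose (i + 1) : ℝ) * (i + 1) = n.choose i * (n - i) := by
    rw [← Nat.cast_sub hin]
    exact_mod_cast Nat.choose_succ_right_eq n i
  have h0 : (0 : ℝ) ≤ n.choose i := by positivity
  have h1 : (0 : ℝ) ≤ n.choose (i + 1) := by positivity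
  refine le_of_mul_le_mul_right ?_ hn
  nlinarith

theorem choose_sub_le_pow_mul_choose {l : ℝ} {n k : ℕ} (hl0 : 0 ≤ l) (hl : l < 1)
    (hk : (k : ℝ) ≤ l * n) {d : ℕ} (hd : d ≤ k) :
    (n.choose (k - d) : ℝ) ≤ (l / (1 - l)) ^ d * n.choose k := by
  induction d with
  | zero => simp
  | succ d ih =>
    have hstep : (1 - l) * n.choose (k - (d + 1)) ≤ l * n.choose (k - (d + 1) + 1) :=
      one_sub_mul_choose_le_mul_choose_succ hl (by
        have : ((k - (d + 1) + 1 : ℕ) : ℝ) ≤ k := by exact_mod_cast (by omega)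
        push_cast at this
        linarith)
    rw [show k - (d + 1) + 1 = k - d by omega] at hstep
    have hr : 0 ≤ l / (1 - l) := div_nonneg hl0 (by linarith)
    calc (n.choose (k - (d + 1)) : ℝ) ≤ l / (1 - l) * n.choose (k - d) := by
          rw [div_mul_eq_mul_div, le_div_iff₀ (by linarith)]
          linarith
      _ ≤ l / (1 - l) * ((l / (1 - l)) ^ d * n.choose k) := by gcongr; exact ih (by omega)
      _ = (l / (1 - l)) ^ (d + 1) * n.choose k := by ring

theorem summable_sq_mul_geometric {l : ℝ} (hl0 : 0 ≤ l) (hl : l < 1 / 2) :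
    Summable fun j : ℕ => (j : ℝ) ^ 2 * (l / (1 - l)) ^ j := by
  refine summable_pow_mul_geometric_of_norm_lt_one 2 ?_
  rw [Real.norm_eq_abs, abs_of_nonneg (div_nonneg hl0 (by linarith)), div_lt_one (by linarith)]
  linarith

theorem tsum_sq_mul_geometric_nonneg {l : ℝ} (hl0 : 0 ≤ l) (hl : l < 1) :
    0 ≤ ∑' j : ℕ, (j : ℝ) ^ 2 * (l / (1 - l)) ^ j :=
  tsum_nonneg fun j => by
    have : 0 ≤ l / (1 - l) := div_nonneg hl0 (by linarith)
    positivity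

theorem sum_choose_mul_sq_sub_le {l : ℝ} {n k : ℕ} (hl0 : 0 ≤ l) (hl : l < 1 / 2)
    (hk : (k : ℝ) ≤ l * n) :
    ∑ i ∈ range (k + 1), (n.choose i : ℝ) * ((k - i : ℕ) : ℝ) ^ 2
      ≤ n.choose k * ∑' j : ℕ, (j : ℝ) ^ 2 * (l / (1 - l)) ^ j := by
  rw [← sum_range_reflect, mul_comm, ← tsum_mul_right]
  calc ∑ j ∈ range (k + 1), (n.choose (k + 1 - 1 - j) : ℝ) * ((k - (k + 1 - 1 - j) : ℕ) : ℝ) ^ 2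
      ≤ ∑ j ∈ range (k + 1), (j : ℝ) ^ 2 * (l / (1 - l)) ^ j * n.choose k := by
        refine sum_le_sum fun j hj => ?_
        have hjk : j ≤ k := Nat.lt_succ_iff.mp (mem_range.mp hj)
        rw [add_tsub_cancel_right, Nat.sub_sub_self hjk, mul_comm, mul_assoc]
        gcongr
        exact choose_sub_le_pow_mul_choose hl0 (by linarith) hk hjk
    _ ≤ ∑' j : ℕ, (j : ℝ) ^ 2 * (l / (1 - l)) ^ j * n.choose k := by
        have hr : 0 ≤ l / (1 - l) := div_nonneg hl0 (by linarith)
        exact ((summable_sq_mul_geometric hl0 hl).mul_right _).sum_le_tsum _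
          fun j _ => by positivity

theorem Fam_eq_filter_card_le {n : ℕ} {l : ℝ} (hl0 : 0 ≤ l) :
    Fam n l = univ.filter (fun A : Finset (Fin n) => #A ≤ ⌊l * n⌋₊) := by
  ext A
  simp only [Fam, mem_filter, mem_univ, true_and]
  exact (Nat.le_floor_iff (by positivity)).symm

theorem variance_choose_card_le {l : ℝ} (hl0 : 0 ≤ l) (hl : l < 1 / 2) (n m : ℕ) :
    (∑ A ∈ Fam n l, (A.card.choose m : ℝ) ^ 2) / #(Fam n l)
        - ((∑ A ∈ Fam n l, (A.card.choose m : ℝ)) / #(Fam n l)) ^ 2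
      ≤ (⌊l * n⌋₊.choose (m - 1) : ℝ) ^ 2 * ∑' j : ℕ, (j : ℝ) ^ 2 * (l / (1 - l)) ^ j := by
  set k := ⌊l * n⌋₊
  set V := ∑' j : ℕ, (j : ℝ) ^ 2 * (l / (1 - l)) ^ j
  have hk : (k : ℝ) ≤ l * n := Nat.floor_le (by positivity)
  have hV : 0 ≤ V := tsum_sq_mul_geometric_nonneg hl0 (by linarith)
  have hFam := Fam_eq_filter_card_le (n := n) hl0
  have hcard : (n.choose k : ℝ) ≤ #(Fam n l) := by
    have hsub : powersetCard k univ ⊆ Fam n l := fun A hA => by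
      rw [hFam, mem_filter, (mem_powersetCard.mp hA).2]
      exact ⟨mem_univ A, le_rfl⟩
    simpa using card_le_card hsub
  calc _ ≤ (∑ A ∈ Fam n l, ((A.card.choose m : ℝ) - k.choose m) ^ 2) / #(Fam n l) :=
        sum_sq_div_card_sub_sq_le _ _ _
    _ ≤ (∑ A ∈ Fam n l, ((k - #A : ℕ) : ℝ) ^ 2 * (k.choose (m - 1) : ℝ) ^ 2) / #(Fam n l) := by
        gcongr with A hA
        rw [hFam, mem_filter] at hA
        exact sq_choose_sub_choose_le hA.2 m
    _ = (k.choose (m - 1) : ℝ) ^ 2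
          * (∑ i ∈ range (k + 1), (n.choose i : ℝ) * ((k - i : ℕ) : ℝ) ^ 2) / #(Fam n l) := by
        rw [← sum_mul, mul_comm]
        congr 2
        rw [hFam, sum_filter_card_le_eq k (fun i => ((k - i : ℕ) : ℝ) ^ 2)]
        simp only [Fintype.card_fin, nsmul_eq_mul]
    _ ≤ (k.choose (m - 1) : ℝ) ^ 2 * (n.choose k * V) / #(Fam n l) := by
        gcongr
        exact sum_choose_mul_sq_sub_le hl0 hl hk
    _ = (k.choose (m - 1) : ℝ) ^ 2 * V * (n.choose k / #(Fam n l)) := by ring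
    _ ≤ (k.choose (m - 1) : ℝ) ^ 2 * V := by
        refine mul_le_of_le_one_right (by positivity) ?_
        exact div_le_one_of_le₀ hcard (by positivity)

theorem stmt3_general (m : ℕ) (l : ℝ) (hl0 : 0 < l) (hl : l < 1 / 2)
    (ε : ℝ) (hε : 0 < ε) :
    ∃ n₀ : ℕ, ∀ n : ℕ, n₀ ≤ n → 0 < n →
      (∑ A ∈ Fam n l, ((A.card.choose m : ℝ)) ^ 2) / ((Fam n l).card : ℝ) -
        ((∑ A ∈ Fam n l, ((A.card.choose m : ℝ))) / ((Fam n l).card : ℝ)) ^ 2 ≤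
      (1 + ε) * Real.sqrt n * (l * n) ^ (2 * m - 2) / (((m - 1).factorial : ℝ)) ^ 2 := by
  set V := ∑' j : ℕ, (j : ℝ) ^ 2 * (l / (1 - l)) ^ j
  have hV : 0 ≤ V := tsum_sq_mul_geometric_nonneg hl0.le (by linarith)
  refine ⟨⌈V ^ 2⌉₊, fun n hn _ => ?_⟩
  have hVn : V ≤ (1 + ε) * Real.sqrt n := by
    have : V ≤ Real.sqrt n := Real.le_sqrt_of_sq_le (Nat.ceil_le.mp hn)
    nlinarith [Real.sqrt_nonneg n]
  have hchoose : (⌊l * n⌋₊.choose (m - 1) : ℝ) ≤ (l * n) ^ (m - 1) / (m - 1).factorial :=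
    (Nat.choose_le_pow_div _ _).trans (by gcongr; exact Nat.floor_le (by positivity))
  calc _ ≤ (⌊l * n⌋₊.choose (m - 1) : ℝ) ^ 2 * V := variance_choose_card_le hl0.le hl n m
    _ ≤ ((l * n) ^ (m - 1) / (m - 1).factorial) ^ 2 * ((1 + ε) * Real.sqrt n) := by gcongr
    _ = _ := by
        rw [div_pow, ← pow_mul, show (m - 1) * 2 = 2 * m - 2 by omega]
        ring

theorem stmt3 (m : ℕ) (hm : 1 ≤ m) (l : ℝ) (hl0 : 0 < l) (hl : l < 1 / 2)
    (ε : ℝ) (hε : 0 < ε) :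
    ∃ n₀ : ℕ, ∀ n : ℕ, n₀ ≤ n → 0 < n →
      (∑ A ∈ Fam n l, ((A.card.choose m : ℝ)) ^ 2) / ((Fam n l).card : ℝ) -
        ((∑ A ∈ Fam n l, ((A.card.choose m : ℝ))) / ((Fam n l).card : ℝ)) ^ 2 ≤
      (1 + ε) * Real.sqrt n * (l * n) ^ (2 * m - 2) / (((m - 1).factorial : ℝ)) ^ 2 :=
  stmt3_general m l hl0 hl ε hε
end

section
/- Fix integers k, m ≥ 1, let λ = 1/2, and fix ε > 0. There exists n₀ such that for all n ≥ n₀ the following holds: let Σ = (a_1, …, a_n) be a sequence in ℤ^k with every entry in [0, M]^k such that e^m_Σ(A₁) ≠ e^m_Σ(A₂) for all distinct A₁, A₂ ∈ F_{1/2,n} with |A₁|, |A₂| ≥ m. Let A be uniform on F_{1/2,n}, X = e^m_Σ(A) ∈ ℤ^k, μ = E[X], and σ² = E[‖X − μ‖²]. Then σ² ≤ (1 + ε) · k(2^{2m+1}·(1/2)^{2m−1} + 2^{2m+1}·(1/2)^{2m} + 1) · n^{2m−1} · M^{2m} / (2^{2m} · ((m−1)!)²). -/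
/-- The `m`-th evaluation of the sequence `a` in `ℤ^k` on the subset `A`
(componentwise products); it is `0` when `|A| < m`. -/
def mthEvalVec (n k m : ℕ) (a : Fin n → Fin k → ℤ) (A : Finset (Fin n)) : Fin k → ℤ :=
  fun j => ∑ S ∈ A.powersetCard m, ∏ i ∈ S, a i j

/-!
Fix a coordinate and write `X A = ∑_{S ⊆ A, #S = m} w S` with `0 ≤ w ≤ M ^ m`. The mean minimises
the sum of squared deviations, so the mean over `F_{1/2,n}` may be replaced by the mean `W / 2 ^ m`
of `X` over the whole cube, and then `F_{1/2,n}` by the whole cube at the cost of the factor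
`2 ^ n / #F_{1/2,n} ≤ 2` (complementation). Over the cube, expanding `X A ^ 2` as a sum over pairs
`S, T ⊆ A` gives the exact identity
`∑_A (X A - W / 2 ^ m) ^ 2 = 2 ^ n / 4 ^ m * ∑_{S,T} w S * w T * (2 ^ #(S ∩ T) - 1)`.
With `2 ^ r - 1 ≤ r + 2 ^ m * r * (r - 1)` and double counting, `∑_{S,T} #(S ∩ T)` is the sum of the
squared degrees `(n - 1).choose (m - 1) ≤ n ^ (m - 1) / (m - 1)!`, while the term counting pairs of
common points is of lower order `n ^ (2 * m - 2)` and is absorbed once `n ≥ 2 ^ m * (m - 1) ^ 2`.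
-/

open Finset
open scoped Nat

theorem sum_sq_sub_mean_le {ι : Type*} (s : Finset ι) (f : ι → ℝ) (c : ℝ) :
    ∑ x ∈ s, (f x - (∑ y ∈ s, f y) / #s) ^ 2 ≤ ∑ x ∈ s, (f x - c) ^ 2 := by
  set μ := (∑ y ∈ s, f y) / #s
  have hμ : ∑ x ∈ s, (f x - μ) = 0 := by
    rcases s.eq_empty_or_nonempty with rfl | hs
    · simp
    rw [sum_sub_distrib, sum_const, nsmul_eq_mul, mul_div_cancel₀ _ (by simp [hs.ne_empty]),
      sub_self]
  have hsplit : ∑ x ∈ s, (f x - c) ^ 2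
      = ∑ x ∈ s, (f x - μ) ^ 2 + 2 * (μ - c) * ∑ x ∈ s, (f x - μ) + #s * (μ - c) ^ 2 := by
    simp only [mul_sum, ← sum_add_distrib, ← nsmul_eq_mul, ← sum_const]
    exact sum_congr rfl fun x _ => by ring
  rw [hsplit, hμ]
  nlinarith [sq_nonneg (μ - c), (#s).cast_nonneg (α := ℝ)]

theorem sum_sum_card_inter_eq {ι β : Type*} [Fintype β] [DecidableEq β] (K : Finset ι)
    (g : ι → Finset β) :
    ∑ S ∈ K, ∑ T ∈ K, #(g S ∩ g T) = ∑ x, #{S ∈ K | x ∈ g S} ^ 2 := by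
  have hinter : ∀ S T, #(g S ∩ g T)
      = ∑ x, (if x ∈ g S then 1 else 0) * (if x ∈ g T then 1 else 0) := fun S T => by
    simp_rw [ite_zero_mul_ite_zero, mul_one, ← mem_inter, ← card_filter, filter_mem_eq_inter,
      univ_inter]
  simp_rw [hinter, card_filter, sq, sum_mul_sum]
  exact (sum_congr rfl fun S _ => sum_comm).trans sum_comm

theorem two_pow_sub_one_le {r m : ℕ} (h : r ≤ m) : 2 ^ r - 1 ≤ r + 2 ^ m * (r * r - r) := by
  rcases Nat.lt_or_ge r 2 with hr | hr
  · interval_cases r <;> simp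
  · have hr1 : 1 ≤ r * r - r := by
      have := Nat.mul_le_mul_right r hr
      omega
    calc 2 ^ r - 1 ≤ 2 ^ m * 1 := by
          rw [mul_one]; exact (Nat.sub_le _ _).trans (Nat.pow_le_pow_right two_pos h)
      _ ≤ r + 2 ^ m * (r * r - r) := (Nat.mul_le_mul_left _ hr1).trans (Nat.le_add_left _ _)

section SubsetsOfFintype

variable {α : Type*} [Fintype α] [DecidableEq α]

theorem card_filter_superset (S : Finset α) :
    #{A : Finset α | S ⊆ A} = 2 ^ (Fintype.card α - #S) := by
  rw [← card_univ, ← card_Icc_finset (subset_univ S)]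
  congr 1
  ext A
  simp

def subsetWeightSum (m : ℕ) (w : Finset α → ℝ) (A : Finset α) : ℝ :=
  ∑ S ∈ A.powersetCard m, w S

theorem subsetWeightSum_eq_sum_ite (m : ℕ) (w : Finset α → ℝ) (A : Finset α) :
    subsetWeightSum m w A = ∑ S ∈ univ.powersetCard m, if S ⊆ A then w S else 0 := by
  rw [subsetWeightSum, ← sum_filter]
  congr 1
  ext S
  simp [and_comm]

theorem sum_ite_subset (S : Finset α) (x : ℝ) :
    ∑ A : Finset α, (if S ⊆ A then x else 0) = 2 ^ (Fintype.card α - #S) * x := by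
  rw [← sum_filter, sum_const, card_filter_superset, nsmul_eq_mul, Nat.cast_pow, Nat.cast_ofNat]

theorem sum_subsetWeightSum (m : ℕ) (w : Finset α → ℝ) :
    ∑ A, subsetWeightSum m w A
      = 2 ^ Fintype.card α / 2 ^ m * ∑ S ∈ univ.powersetCard m, w S := by
  simp_rw [subsetWeightSum_eq_sum_ite]
  rw [sum_comm, mul_sum]
  refine sum_congr rfl fun S hS => ?_
  rw [mem_powersetCard_univ] at hS
  rw [sum_ite_subset, hS, pow_sub₀ _ two_ne_zero (hS ▸ card_le_univ S), div_eq_mul_inv]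

theorem sum_subsetWeightSum_sq (m : ℕ) (w : Finset α → ℝ) :
    ∑ A, subsetWeightSum m w A ^ 2 = 2 ^ Fintype.card α / 4 ^ m *
      ∑ S ∈ univ.powersetCard m, ∑ T ∈ univ.powersetCard m, w S * w T * 2 ^ #(S ∩ T) := by
  simp_rw [subsetWeightSum_eq_sum_ite, sq, sum_mul_sum, mul_sum]
  rw [sum_comm]
  refine sum_congr rfl fun S hS => ?_
  rw [sum_comm]
  refine sum_congr rfl fun T hT => ?_
  have hST : #(S ∪ T) + #(S ∩ T) = 2 * m := by
    rw [card_union_add_card_inter, mem_powersetCard_univ.1 hS, mem_powersetCard_univ.1 hT]; ring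
  have hunion : (2 : ℝ) ^ (Fintype.card α - #(S ∪ T))
      = 2 ^ Fintype.card α / 4 ^ m * 2 ^ #(S ∩ T) := by
    rw [pow_sub₀ _ two_ne_zero (card_le_univ _), show (4 : ℝ) ^ m = 2 ^ #(S ∪ T) * 2 ^ #(S ∩ T) by
      rw [← pow_add, hST, pow_mul]; norm_num]
    field_simp
  calc ∑ A : Finset α, (if S ⊆ A then w S else 0) * (if T ⊆ A then w T else 0)
      = ∑ A : Finset α, if S ∪ T ⊆ A then w S * w T else 0 := by
        refine sum_congr rfl fun A _ => ?_
        by_cases hSA : S ⊆ A <;> by_cases hTA : T ⊆ A <;> simp [hSA, hTA, union_subset_iff]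
    _ = _ := by rw [sum_ite_subset, hunion]; ring

theorem sum_sq_sub_subsetWeightSum_eq (m : ℕ) (w : Finset α → ℝ) :
    ∑ A, (subsetWeightSum m w A - (∑ S ∈ univ.powersetCard m, w S) / 2 ^ m) ^ 2
      = 2 ^ Fintype.card α / 4 ^ m * ∑ S ∈ univ.powersetCard m, ∑ T ∈ univ.powersetCard m,
          w S * w T * (2 ^ #(S ∩ T) - 1) := by
  set W := ∑ S ∈ univ.powersetCard m, w S
  have hexpand : ∀ A, (subsetWeightSum m w A - W / 2 ^ m) ^ 2
      = subsetWeightSum m w A ^ 2 - 2 * (W / 2 ^ m) * subsetWeightSum m w A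
        + (W / 2 ^ m) ^ 2 := fun A => by ring
  simp only [hexpand, sum_add_distrib, sum_sub_distrib, ← mul_sum, sum_const, card_univ,
    Fintype.card_finset, Nat.cast_pow, Nat.cast_ofNat, sum_subsetWeightSum,
    sum_subsetWeightSum_sq, mul_sub, mul_one, nsmul_eq_mul]
  rw [← sum_mul]
  have h4 : (4 : ℝ) ^ m = 2 ^ m * 2 ^ m := by rw [← mul_pow]; norm_num
  rw [h4]
  field_simp
  ring

theorem sum_sq_sub_mean_subsetWeightSum_le (F : Finset (Finset α)) {m : ℕ} {w : Finset α → ℝ}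
    {B : ℝ} (hw : ∀ S : Finset α, #S = m → 0 ≤ w S ∧ w S ≤ B) :
    ∑ A ∈ F, (subsetWeightSum m w A - (∑ A' ∈ F, subsetWeightSum m w A') / #F) ^ 2
      ≤ 2 ^ Fintype.card α / 4 ^ m * B ^ 2 * ∑ S ∈ (univ : Finset α).powersetCard m,
          ∑ T ∈ (univ : Finset α).powersetCard m, ((2 ^ #(S ∩ T) - 1 : ℕ) : ℝ) := by
  refine (sum_sq_sub_mean_le _ _ ((∑ S ∈ univ.powersetCard m, w S) / 2 ^ m)).trans ?_
  refine (sum_le_sum_of_subset_of_nonneg (subset_univ F) fun A _ _ => sq_nonneg _).trans ?_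
  rw [sum_sq_sub_subsetWeightSum_eq, mul_assoc]
  simp only [mul_sum, Nat.cast_sub Nat.one_le_two_pow, Nat.cast_pow, Nat.cast_ofNat, Nat.cast_one]
  gcongr with S hS T hT
  · exact sub_nonneg.2 (one_le_pow₀ one_le_two)
  obtain ⟨hS0, hSB⟩ := hw S (mem_powersetCard_univ.1 hS)
  obtain ⟨hT0, hTB⟩ := hw T (mem_powersetCard_univ.1 hT)
  rw [sq]
  exact mul_le_mul hSB hTB hT0 (hS0.trans hSB)

theorem factorial_mul_card_filter_mem_le (m : ℕ) (x : α) :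
    (m - 1)! * #{S ∈ (univ : Finset α).powersetCard m | x ∈ S} ≤ Fintype.card α ^ (m - 1) := by
  rcases m with _ | m
  · simp [filter_singleton]
  have hfilter : {S ∈ (univ : Finset α).powersetCard (m + 1) | x ∈ S}
      = {S ∈ (univ : Finset α).powersetCard (m + 1) | {x} ⊆ S} := by
    simp
  rw [hfilter, card_filter_powersetCard_subset _ _ _ (subset_univ _) (by simp), card_singleton,
    Finset.card_univ, Nat.add_sub_cancel, ← Nat.descFactorial_eq_factorial_mul_choose]
  exact (Nat.descFactorial_le_pow _ _).trans (Nat.pow_le_pow_left (Nat.sub_le _ _) _)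

theorem factorial_mul_card_filter_mem_offDiag_le (m : ℕ) (p : α × α) :
    (m - 1)! * #{S ∈ (univ : Finset α).powersetCard m | p ∈ S.offDiag}
      ≤ (m - 1) * Fintype.card α ^ (m - 2) := by
  rcases p with ⟨x, y⟩
  by_cases hxy : x = y
  · simp [hxy]
  rcases Nat.lt_or_ge m 2 with hm | hm
  · have : {S ∈ (univ : Finset α).powersetCard m | (x, y) ∈ S.offDiag} = ∅ := by
      refine filter_false_of_mem fun S hS hxyS => ?_
      rw [mem_offDiag] at hxyS
      have := one_lt_card.2 ⟨x, hxyS.1, y, hxyS.2.1, hxy⟩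
      rw [mem_powersetCard_univ.1 hS] at this
      omega
    rw [this]
    simp
  have hfilter : {S ∈ (univ : Finset α).powersetCard m | (x, y) ∈ S.offDiag}
      = {S ∈ (univ : Finset α).powersetCard m | {x, y} ⊆ S} := by
    simp [hxy, insert_subset_iff]
  have hfact : (m - 1)! = (m - 1) * (m - 2)! := by
    rw [show m - 1 = m - 2 + 1 by omega, Nat.factorial_succ]
  rw [hfilter, card_filter_powersetCard_subset _ _ _ (subset_univ _) (by simp [card_pair hxy, hm]),
    card_pair hxy, Finset.card_univ, hfact, mul_assoc, ← Nat.descFactorial_eq_factorial_mul_choose]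
  exact Nat.mul_le_mul_left _
    ((Nat.descFactorial_le_pow _ _).trans (Nat.pow_le_pow_left (Nat.sub_le _ _) _))

theorem factorial_sq_mul_sum_sum_two_pow_card_inter_le {m : ℕ} (hm : 1 ≤ m)
    (hN : 2 ^ m * (m - 1) ^ 2 ≤ Fintype.card α) :
    (m - 1)! ^ 2 * ∑ S ∈ (univ : Finset α).powersetCard m, ∑ T ∈ (univ : Finset α).powersetCard m,
      (2 ^ #(S ∩ T) - 1) ≤ 2 * Fintype.card α ^ (2 * m - 1) := by
  set N := Fintype.card α
  set K := (univ : Finset α).powersetCard m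
  have hterm : ∀ S ∈ K, ∀ T ∈ K,
      2 ^ #(S ∩ T) - 1 ≤ #(S ∩ T) + 2 ^ m * #(S.offDiag ∩ T.offDiag) := fun S hS T _ => by
    rw [← offDiag_inter, offDiag_card]
    refine two_pow_sub_one_le ?_
    exact (card_le_card inter_subset_left).trans (mem_powersetCard_univ.1 hS).le
  have hsingle : ∑ x : α, ((m - 1)! * #{S ∈ K | x ∈ S}) ^ 2 ≤ N * (N ^ (m - 1)) ^ 2 := by
    refine (sum_le_sum fun x (_ : x ∈ (univ : Finset α)) =>
      Nat.pow_le_pow_left (factorial_mul_card_filter_mem_le m x) 2).trans_eq ?_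
    rw [sum_const, card_univ, smul_eq_mul]
  have hpair : ∑ p : α × α, ((m - 1)! * #{S ∈ K | p ∈ S.offDiag}) ^ 2
      ≤ N ^ 2 * ((m - 1) * N ^ (m - 2)) ^ 2 := by
    refine (sum_le_sum fun p (_ : p ∈ (univ : Finset (α × α))) =>
      Nat.pow_le_pow_left (factorial_mul_card_filter_mem_offDiag_le m p) 2).trans_eq ?_
    rw [sum_const, card_univ, Fintype.card_prod, smul_eq_mul]
    ring
  have hpow : N * (N ^ (m - 1)) ^ 2 + 2 ^ m * (N ^ 2 * ((m - 1) * N ^ (m - 2)) ^ 2)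
      ≤ 2 * N ^ (2 * m - 1) := by
    obtain ⟨j, rfl⟩ | ⟨j, rfl⟩ : m = 1 ∨ ∃ j, m = j + 2 := by
      rcases m with _ | _ | j <;> simp_all
    · simp; omega
    · have : 2 ^ (j + 2) * (j + 1) ^ 2 * N ^ (2 * j + 2) ≤ N * N ^ (2 * j + 2) :=
        Nat.mul_le_mul_right _ (by simpa using hN)
      calc _ = N ^ (2 * j + 3) + 2 ^ (j + 2) * (j + 1) ^ 2 * N ^ (2 * j + 2) := by
            simp only [show j + 2 - 1 = j + 1 by omega, show j + 2 - 2 = j by omega]; ring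
        _ ≤ 2 * N ^ (2 * j + 3) := by rw [pow_succ' N (2 * j + 2)] at *; omega
        _ = 2 * N ^ (2 * (j + 2) - 1) := by congr 2
  calc (m - 1)! ^ 2 * ∑ S ∈ K, ∑ T ∈ K, (2 ^ #(S ∩ T) - 1)
      ≤ (m - 1)! ^ 2 * (∑ S ∈ K, ∑ T ∈ K, #(S ∩ T)
          + 2 ^ m * ∑ S ∈ K, ∑ T ∈ K, #(S.offDiag ∩ T.offDiag)) := by
        simp only [mul_sum, ← sum_add_distrib]
        gcongr with S hS T hT
        exact hterm S hS T hT
    _ = ∑ x : α, ((m - 1)! * #{S ∈ K | x ∈ S}) ^ 2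
          + 2 ^ m * ∑ p : α × α, ((m - 1)! * #{S ∈ K | p ∈ S.offDiag}) ^ 2 := by
        rw [show ∑ S ∈ K, ∑ T ∈ K, #(S ∩ T) = _ from sum_sum_card_inter_eq K id,
          sum_sum_card_inter_eq K offDiag]
        simp only [mul_pow, ← mul_sum, id]
        ring
    _ ≤ 2 * N ^ (2 * m - 1) := (add_le_add hsingle (Nat.mul_le_mul_left _ hpair)).trans hpow

end SubsetsOfFintype

theorem two_pow_le_two_mul_card_Fam (n : ℕ) : 2 ^ n ≤ 2 * #(Fam n (1 / 2)) := by
  have hcompl : #{A : Finset (Fin n) | ¬ (#A : ℝ) ≤ 1 / 2 * n} ≤ #(Fam n (1 / 2)) := by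
    refine card_le_card_of_injOn compl (fun A hA => ?_) compl_injective.injOn
    have hAn : #A ≤ n := (card_le_univ A).trans_eq (Fintype.card_fin n)
    simp only [coe_filter, mem_univ, true_and, not_le, Set.mem_ofPred_eq] at hA
    simp only [Fam, coe_filter, mem_univ, true_and, card_compl, Fintype.card_fin,
      Set.mem_ofPred_eq]
    push_cast [hAn]
    linarith
  have hsplit := card_filter_add_card_filter_not (s := univ)
    (fun A : Finset (Fin n) => (#A : ℝ) ≤ 1 / 2 * n)
  rw [card_univ, Fintype.card_finset, Fintype.card_fin] at hsplit
  rw [Fam] at hcompl ⊢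
  omega

theorem variance_subsetWeightSum_le {n m : ℕ} (hm : 1 ≤ m) (hn : 2 ^ m * (m - 1) ^ 2 ≤ n)
    (w : Finset (Fin n) → ℝ) (B : ℝ) (hw : ∀ S : Finset (Fin n), #S = m → 0 ≤ w S ∧ w S ≤ B) :
    (∑ A ∈ Fam n (1 / 2), (subsetWeightSum m w A
        - (∑ A' ∈ Fam n (1 / 2), subsetWeightSum m w A') / #(Fam n (1 / 2))) ^ 2)
      / #(Fam n (1 / 2)) ≤ 4 * (n : ℝ) ^ (2 * m - 1) * B ^ 2 / (4 ^ m * ((m - 1)! : ℝ) ^ 2) := by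
  set K := (univ : Finset (Fin n)).powersetCard m
  set I : ℝ := ∑ S ∈ K, ∑ T ∈ K, ((2 ^ #(S ∩ T) - 1 : ℕ) : ℝ)
  have hcube := sum_sq_sub_mean_subsetWeightSum_le (Fam n (1 / 2)) hw
  rw [Fintype.card_fin] at hcube
  have hcount : ((m - 1)! : ℝ) ^ 2 * I ≤ 2 * (n : ℝ) ^ (2 * m - 1) := by
    have := factorial_sq_mul_sum_sum_two_pow_card_inter_le (α := Fin n) hm (by simpa using hn)
    simp only [Fintype.card_fin] at this
    simp only [I]
    exact_mod_cast this
  have hFam : (2 : ℝ) ^ n ≤ 2 * #(Fam n (1 / 2)) := by exact_mod_cast two_pow_le_two_mul_card_Fam n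
  have hFam_pos : (0 : ℝ) < #(Fam n (1 / 2)) := by
    have := pow_pos (two_pos (α := ℝ)) n
    linarith
  calc _ ≤ 2 ^ n / 4 ^ m * B ^ 2 * I / #(Fam n (1 / 2)) := by gcongr
    _ = B ^ 2 / 4 ^ m * (2 ^ n * (((m - 1)! : ℝ) ^ 2 * I)) / (#(Fam n (1 / 2)) * (m - 1)! ^ 2) := by
        field_simp
    _ ≤ B ^ 2 / 4 ^ m * (2 * #(Fam n (1 / 2)) * (2 * (n : ℝ) ^ (2 * m - 1)))
          / (#(Fam n (1 / 2)) * (m - 1)! ^ 2) := by gcongr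
    _ = 4 * (n : ℝ) ^ (2 * m - 1) * B ^ 2 / (4 ^ m * ((m - 1)! : ℝ) ^ 2) := by
        field_simp
        ring

theorem cast_mthEvalVec (n k m : ℕ) (a : Fin n → Fin k → ℤ) (A : Finset (Fin n)) (j : Fin k) :
    (mthEvalVec n k m a A j : ℝ) = subsetWeightSum m (fun S => ∏ i ∈ S, (a i j : ℝ)) A := by
  simp [mthEvalVec, subsetWeightSum]

theorem variance_mthEvalVec_le {n k m : ℕ} (hm : 1 ≤ m) (hn : 2 ^ m * (m - 1) ^ 2 ≤ n) (M : ℤ)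
    (a : Fin n → Fin k → ℤ) (ha : ∀ i j, 0 ≤ a i j ∧ a i j ≤ M) (j : Fin k) :
    (∑ A ∈ Fam n (1 / 2), ((mthEvalVec n k m a A j : ℝ)
        - (∑ B ∈ Fam n (1 / 2), (mthEvalVec n k m a B j : ℝ)) / #(Fam n (1 / 2))) ^ 2)
      / #(Fam n (1 / 2))
      ≤ 4 * (n : ℝ) ^ (2 * m - 1) * ((M : ℝ) ^ m) ^ 2 / (4 ^ m * ((m - 1)! : ℝ) ^ 2) := by
  simp only [cast_mthEvalVec]
  refine variance_subsetWeightSum_le hm hn _ _ fun S hS => ⟨?_, ?_⟩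
  · exact prod_nonneg fun i _ => by exact_mod_cast (ha i j).1
  · calc ∏ i ∈ S, (a i j : ℝ) ≤ ∏ _i ∈ S, (M : ℝ) :=
          prod_le_prod (fun i _ => by exact_mod_cast (ha i j).1)
            (fun i _ => by exact_mod_cast (ha i j).2)
      _ = (M : ℝ) ^ m := by rw [prod_const, hS]

theorem two_pow_mul_half_pow_add_eq_seven {m : ℕ} (hm : 1 ≤ m) :
    (2 : ℝ) ^ (2 * m + 1) * (1 / 2) ^ (2 * m - 1) + 2 ^ (2 * m + 1) * (1 / 2) ^ (2 * m) + 1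
      = 7 := by
  obtain ⟨j, rfl⟩ := Nat.exists_eq_add_of_le' hm
  rw [show 2 * (j + 1) - 1 = 2 * j + 1 by omega, show 2 * (j + 1) + 1 = (2 * j + 1) + 2 by ring,
    show 2 * (j + 1) = (2 * j + 1) + 1 by ring]
  simp only [pow_add, div_pow, one_pow]
  field_simp
  norm_num

theorem stmt7_general (k m : ℕ) (hm : 1 ≤ m) (ε : ℝ) (hε : 0 < ε) :
    ∃ n₀ : ℕ, ∀ n : ℕ, n₀ ≤ n → ∀ M : ℤ, ∀ a : Fin n → Fin k → ℤ,
      (∀ i j, 0 ≤ a i j ∧ a i j ≤ M) →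
      (∀ A₁ A₂ : Finset (Fin n), A₁ ∈ Fam n (1 / 2) → A₂ ∈ Fam n (1 / 2) → A₁ ≠ A₂ →
        m ≤ A₁.card → m ≤ A₂.card → mthEvalVec n k m a A₁ ≠ mthEvalVec n k m a A₂) →
      (∑ A ∈ Fam n (1 / 2), ∑ j, ((mthEvalVec n k m a A j : ℝ) -
          (∑ B ∈ Fam n (1 / 2), (mthEvalVec n k m a B j : ℝ)) / ((Fam n (1 / 2)).card : ℝ)) ^ 2) /
        ((Fam n (1 / 2)).card : ℝ) ≤
      (1 + ε) * ((k : ℝ) * (2 ^ (2 * m + 1) * (1 / 2 : ℝ) ^ (2 * m - 1) +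
          2 ^ (2 * m + 1) * (1 / 2 : ℝ) ^ (2 * m) + 1)) * (n : ℝ) ^ (2 * m - 1) *
        (M : ℝ) ^ (2 * m) / (2 ^ (2 * m) * (((m - 1).factorial : ℝ)) ^ 2) := by
  refine ⟨2 ^ m * (m - 1) ^ 2, fun n hn M a ha _ => ?_⟩
  set bound := (n : ℝ) ^ (2 * m - 1) * ((M : ℝ) ^ m) ^ 2 / (4 ^ m * ((m - 1)! : ℝ) ^ 2)
  have hbound : 0 ≤ bound := by positivity
  rw [two_pow_mul_half_pow_add_eq_seven hm, pow_mul' (M : ℝ), pow_mul (2 : ℝ),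
    show (2 : ℝ) ^ 2 = 4 by norm_num, sum_comm, sum_div]
  calc _ ≤ ∑ _j : Fin k, 4 * bound := sum_le_sum fun j _ =>
        (variance_mthEvalVec_le hm hn M a ha j).trans_eq (by ring)
    _ = k * (4 * bound) := by rw [sum_const, card_univ, Fintype.card_fin, nsmul_eq_mul]
    _ ≤ (1 + ε) * (k * 7) * bound := by nlinarith [mul_nonneg k.cast_nonneg hbound]
    _ = _ := by ring

theorem stmt7 (k m : ℕ) (hk : 1 ≤ k) (hm : 1 ≤ m) (ε : ℝ) (hε : 0 < ε) :
    ∃ n₀ : ℕ, ∀ n : ℕ, n₀ ≤ n → ∀ M : ℤ, ∀ a : Fin n → Fin k → ℤ,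
      (∀ i j, 0 ≤ a i j ∧ a i j ≤ M) →
      (∀ A₁ A₂ : Finset (Fin n), A₁ ∈ Fam n (1 / 2) → A₂ ∈ Fam n (1 / 2) → A₁ ≠ A₂ →
        m ≤ A₁.card → m ≤ A₂.card → mthEvalVec n k m a A₁ ≠ mthEvalVec n k m a A₂) →
      (∑ A ∈ Fam n (1 / 2), ∑ j, ((mthEvalVec n k m a A j : ℝ) -
          (∑ B ∈ Fam n (1 / 2), (mthEvalVec n k m a B j : ℝ)) / ((Fam n (1 / 2)).card : ℝ)) ^ 2) /
        ((Fam n (1 / 2)).card : ℝ) ≤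
      (1 + ε) * ((k : ℝ) * (2 ^ (2 * m + 1) * (1 / 2 : ℝ) ^ (2 * m - 1) +
          2 ^ (2 * m + 1) * (1 / 2 : ℝ) ^ (2 * m) + 1)) * (n : ℝ) ^ (2 * m - 1) *
        (M : ℝ) ^ (2 * m) / (2 ^ (2 * m) * (((m - 1).factorial : ℝ)) ^ 2) :=
  stmt7_general k m hm ε hε
end
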